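/- arXiv:2304.12588 — 9 statements merged into one kernel-verified Lean document; each statement's English description precedes it below -/
import Mathlib

section
/- Let V, W be types, U a finite nonempty index type, and fix constraint predicates α β : V → Prop, γ : U → V → W → Prop, δ : U → V → V → W → Prop. If (Inv, A) is an arbiter-scheme solution, then the family D defined by D u v w := ¬(Inv v ∧ A u v w) is a doomed-scheme solution. -/
/-- (A1)-(A5): `(Inv, A)` is an arbiter-scheme solution. -/
def IsArbiterSol {U V W : Type*} (α β : V → Prop) (γ : U → V → W → Prop)
    (δ : U → V → V → W → Prop) (Inv : V → Prop) (A : U → V → W → Prop) : Prop :=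
  (∀ v, α v → Inv v) ∧
  (∀ v, Inv v → ¬ β v) ∧
  (∀ u v w, Inv v → A u v w → ¬ γ u v w) ∧
  (∀ u v v' w, Inv v → A u v w → δ u v v' w → Inv v') ∧
  (∀ v w, Inv v → ∃ u, A u v w)

/-- (D1)-(D4): `D` is a doomed-scheme solution. -/
def IsDoomedSol {U V W : Type*} (α β : V → Prop) (γ : U → V → W → Prop)
    (δ : U → V → V → W → Prop) (D : U → V → W → Prop) : Prop :=
  (∀ v w, α v → ∃ u, ¬ D u v w) ∧
  (∀ u v w, β v → D u v w) ∧
  (∀ u v w, γ u v w → D u v w) ∧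
  (∀ u v v' w w', (∀ u', D u' v' w') → δ u v v' w → D u v w)

/-- (B1)-(B4): `B` is an AInv-scheme solution. -/
def IsAInvSol {U V W : Type*} (α β : V → Prop) (γ : U → V → W → Prop)
    (δ : U → V → V → W → Prop) (B : U → V → W → Prop) : Prop :=
  (∀ v w, α v → ∃ u, B u v w) ∧
  (∀ u v w, B u v w → ¬ β v) ∧
  (∀ u v w, B u v w → ¬ γ u v w) ∧
  (∀ u v v' w w', B u v w → δ u v v' w → ∃ u', B u' v' w')

theorem arbiter_to_doomed {U V W : Type*} [Fintype U] [Nonempty U]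
    (α β : V → Prop) (γ : U → V → W → Prop) (δ : U → V → V → W → Prop)
    (Inv : V → Prop) (A : U → V → W → Prop)
    (hIA : IsArbiterSol α β γ δ Inv A) :
    IsDoomedSol α β γ δ (fun u v w => ¬ (Inv v ∧ A u v w)) := by
  obtain ⟨h1, h2, h3, h4, h5⟩ := hIA
  refine ⟨?_, ?_, ?_, ?_⟩
  · intro v w ha
    have hInv := h1 v ha
    obtain ⟨u, hu⟩ := h5 v w hInv
    exact ⟨u, fun h => h ⟨hInv, hu⟩⟩
  · rintro u v w hb ⟨hInv, _⟩
    exact h2 v hInv hb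
  · rintro u v w hg ⟨hInv, hA⟩
    exact h3 u v w hInv hA hg
  · rintro u v v' w w' hall hd ⟨hInv, hA⟩
    have hInv' := h4 u v v' w hInv hA hd
    obtain ⟨u', hu'⟩ := h5 v' w' hInv'
    exact hall u' ⟨hInv', hu'⟩
end

section
/- Let V, W be types with W nonempty, U a finite nonempty index type, and fix constraint predicates α β : V → Prop, γ : U → V → W → Prop, δ : U → V → V → W → Prop. If D is a doomed-scheme solution, then the pair (Inv, A) defined by Inv v := ∀ w, ∃ u, ¬ D u v w and A u v w := ¬ D u v w is an arbiter-scheme solution. -/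
theorem doomed_to_arbiter {U V W : Type*} [Fintype U] [Nonempty U] [Nonempty W]
    (α β : V → Prop) (γ : U → V → W → Prop) (δ : U → V → V → W → Prop)
    (D : U → V → W → Prop)
    (hD : IsDoomedSol α β γ δ D) :
    IsArbiterSol α β γ δ (fun v => ∀ w, ∃ u, ¬ D u v w) (fun u v w => ¬ D u v w) := by
  obtain ⟨hD1, hD2, hD3, hD4⟩ := hD
  refine ⟨fun v hv w => hD1 v w hv, ?_, ?_, ?_, fun v w hv => hv w⟩
  · intro v hv hb
    obtain ⟨w⟩ := ‹Nonempty W›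
    obtain ⟨u, hu⟩ := hv w
    exact hu (hD2 u v w hb)
  · intro u v w _ hA hg
    exact hA (hD3 u v w hg)
  · intro u v v' w hv hA hd w'
    by_contra h
    push_neg at h
    exact hA (hD4 u v v' w w' h hd)
end

section
/- Let V, W be types with W nonempty, U a finite nonempty index type, and fix constraint predicates α β : V → Prop, γ : U → V → W → Prop, δ : U → V → V → W → Prop. Then there exists an arbiter-scheme solution (Inv, A) if and only if there exists a doomed-scheme solution D. -/
theorem arbiter_iff_doomed {U V W : Type*} [Fintype U] [Nonempty U] [Nonempty W]
    (α β : V → Prop) (γ : U → V → W → Prop) (δ : U → V → V → W → Prop) :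
    (∃ (Inv : V → Prop) (A : U → V → W → Prop), IsArbiterSol α β γ δ Inv A) ↔
    (∃ D : U → V → W → Prop, IsDoomedSol α β γ δ D) := by
  constructor
  · rintro ⟨Inv, A, h1, h2, h3, h4, h5⟩
    refine ⟨fun u v w => ¬ (Inv v ∧ A u v w), ?_, ?_, ?_, ?_⟩
    · intro v w hα
      obtain ⟨u, hu⟩ := h5 v w (h1 v hα)
      exact ⟨u, not_not_intro ⟨h1 v hα, hu⟩⟩
    · intro u v w hβ ⟨hI, _⟩; exact h2 v hI hβ
    · intro u v w hγ ⟨hI, hA⟩; exact h3 u v w hI hA hγ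
    · intro u v v' w w' hall hδ ⟨hI, hA⟩
      have hI' := h4 u v v' w hI hA hδ
      obtain ⟨u', hu'⟩ := h5 v' w' hI'
      exact hall u' ⟨hI', hu'⟩
  · rintro ⟨D, hD1, hD2, hD3, hD4⟩
    refine ⟨fun v => ∀ w, ∃ u, ¬ D u v w, fun u v w => ¬ D u v w, ?_, ?_, ?_, ?_, ?_⟩
    · intro v hα w; exact hD1 v w hα
    · intro v hI hβ
      obtain ⟨u, hu⟩ := hI (Classical.arbitrary W)
      exact hu (hD2 u v _ hβ)
    · intro u v w _ hA hγ; exact hA (hD3 u v w hγ)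
    · intro u v v' w hI hA hδ w'
      by_contra h
      push_neg at h
      exact hA (hD4 u v v' w w' h hδ)
    · intro v w hI; exact hI w
end

section
/- Let V, W be types, U a finite nonempty index type, and fix constraint predicates α β : V → Prop, γ : U → V → W → Prop, δ : U → V → V → W → Prop. If (Inv, A) is an arbiter-scheme solution, then the family B defined by B u v w := Inv v ∧ A u v w is an AInv-scheme solution. -/
theorem arbiter_to_ainv {U V W : Type*} [Fintype U] [Nonempty U]
    (α β : V → Prop) (γ : U → V → W → Prop) (δ : U → V → V → W → Prop)
    (Inv : V → Prop) (A : U → V → W → Prop)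
    (hIA : IsArbiterSol α β γ δ Inv A) :
    IsAInvSol α β γ δ (fun u v w => Inv v ∧ A u v w) := by
  obtain ⟨h1, h2, h3, h4, h5⟩ := hIA
  refine ⟨?_, ?_, ?_, ?_⟩
  · intro v w hα
    obtain ⟨u, hu⟩ := h5 v w (h1 v hα)
    exact ⟨u, h1 v hα, hu⟩
  · intro u v w ⟨hI, _⟩
    exact h2 v hI
  · intro u v w ⟨hI, hA⟩
    exact h3 u v w hI hA
  · intro u v v' w w' ⟨hI, hA⟩ hδ
    have hI' := h4 u v v' w hI hA hδ
    obtain ⟨u', hu'⟩ := h5 v' w' hI'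
    exact ⟨u', hI', hu'⟩
end

section
/- Let V, W be types with W nonempty, U a finite nonempty index type, and fix constraint predicates α β : V → Prop, γ : U → V → W → Prop, δ : U → V → V → W → Prop. If B is an AInv-scheme solution, then the pair (Inv, A) defined by Inv v := ∀ w, ∃ u, B u v w and A := B is an arbiter-scheme solution. -/
theorem ainv_to_arbiter {U V W : Type*} [Fintype U] [Nonempty U] [Nonempty W]
    (α β : V → Prop) (γ : U → V → W → Prop) (δ : U → V → V → W → Prop)
    (B : U → V → W → Prop)
    (hB : IsAInvSol α β γ δ B) :
    IsArbiterSol α β γ δ (fun v => ∀ w, ∃ u, B u v w) B := by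
  refine ⟨fun v hv w => hB.1 v w hv, ?_, fun u v w _ h => hB.2.2.1 u v w h,
    fun u v v' w hv h hd w' => hB.2.2.2 u v v' w w' h hd, fun v w hv => hv w⟩
  intro v hv hb
  obtain ⟨w⟩ := ‹Nonempty W›
  obtain ⟨u, hu⟩ := hv w
  exact hB.2.1 u v w hu hb
end

section
/- Let TS be a semantic labeled transition system with total transition relation, and fix a k-safety specification φ̂ given by ψ, (ξ i), φ. Then there exist Inv : (Fin k → S) → Prop and A : Schedule → (Fin k → S) → Prop satisfying (K1) ∀ s̄, (∀ i, s̄ i ∈ Init) → ψ s̄ → Inv s̄; (K2) ∀ s̄, Inv s̄ → ¬ Bad s̄; (K3) ∀ M s̄, Inv s̄ → A M s̄ → M is valid for s̄; (K4) ∀ M s̄ s̄' ℓ̄, Inv s̄ → A M s̄ → s̄ ↝[M,ℓ̄] s̄' → Inv s̄'; (K5) ∀ s̄, Inv s̄ → ∃ M, A M s̄, if and only if TS ⊨ φ̂. -/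
/-- A semantic labeled transition system with a total transition relation. -/
structure LTS (S L : Type*) where
  Init : Set S
  Tr : S → L → S → Prop
  total : ∀ s, ∃ ℓ s', Tr s ℓ s'

/-- `t` is a trace of `T` starting from `s`. -/
def LTS.IsTrace {S L : Type*} (T : LTS S L) (t : ℕ → S) (s : S) : Prop :=
  t 0 = s ∧ ∀ n, ∃ ℓ, T.Tr (t n) ℓ (t (n + 1))

/-- The trace `t` has at least `j + 1` observation points with respect to `ξ`. -/
def HasObsUpTo {S : Type*} (ξ : S → Prop) (t : ℕ → S) (j : ℕ) : Prop :=
  ∃ f : Fin (j + 1) → ℕ, StrictMono f ∧ ∀ i, ξ (t (f i))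

/-- The `j`-th observation state of the trace `t` with respect to `ξ`:
`t n_j` where `n_j` is the `j`-th smallest element of `{n | ξ (t n)}`. -/
noncomputable def obsState {S : Type*} (ξ : S → Prop) (t : ℕ → S) (j : ℕ) : S :=
  t (Nat.nth (fun n => ξ (t n)) j)

/-- `TS ⊨ φ̂` for the `k`-safety specification given by `ψ`, `ξ`, `φ`. -/
def kSafetyModels {S L : Type*} (T : LTS S L) {k : ℕ} (ψ : (Fin k → S) → Prop)
    (ξ : Fin k → S → Prop) (φ : (Fin k → S) → Prop) : Prop :=
  ∀ sb : Fin k → S, (∀ i, sb i ∈ T.Init) → ψ sb →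
    ∀ t : Fin k → ℕ → S, (∀ i, T.IsTrace (t i) (sb i)) →
      ∀ j : ℕ, (∀ i, HasObsUpTo (ξ i) (t i) j) →
        φ (fun i => obsState (ξ i) (t i) j)

/-- `s̄ ↝[M,ℓ̄] s̄'`: the composed step with schedule `M` and labels `ℓ̄`. -/
def ComposedStep {S L : Type*} (T : LTS S L) {k : ℕ} (M : Set (Fin k)) (ℓ : Fin k → L)
    (sb sb' : Fin k → S) : Prop :=
  (∀ i ∈ M, T.Tr (sb i) (ℓ i) (sb' i)) ∧ ∀ i ∉ M, sb' i = sb i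

/-- `M` is a valid schedule for the composed state `s̄`. -/
def ValidSched {S : Type*} {k : ℕ} (ξ : Fin k → S → Prop) (M : Set (Fin k))
    (sb : Fin k → S) : Prop :=
  (∀ i ∈ M, ¬ ξ i (sb i)) ∨ (M = Set.univ ∧ ∀ i, ξ i (sb i))

/-- `Bad s̄`: all traces are at observation points but `φ` fails. -/
def BadState {S : Type*} {k : ℕ} (ξ : Fin k → S → Prop) (φ : (Fin k → S) → Prop)
    (sb : Fin k → S) : Prop :=
  (∀ i, ξ i (sb i)) ∧ ¬ φ sb

/-- A schedule: a nonempty subset of `Fin k`. -/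
def Sched (k : ℕ) := {M : Set (Fin k) // M.Nonempty}

/-!
Soundness: starting from the initial tuple of the given traces, let `A` choose a schedule and
advance the scheduled components along their own traces. Validity keeps all components at the same
number of passed observation points, and every step moves strictly towards the `j`-th observation
points, so these are reached with `Inv` holding and `¬ Bad` gives `φ` there.
Completeness: take for `Inv` the tuples reachable from a `ψ`-initial tuple along traces that have
all passed the same number `c` of observation points, and for `A` validity itself. A valid step
keeps the counts equal, and a reachable tuple of observation points is the tuple of `c`-th
observation states of some traces, where `TS ⊨ φ̂` applies.
-/

theorem le_induction_of_exists_lt {α : Type*} [PartialOrder α] [LocallyFiniteOrder α]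
    {P : α → Prop} {a b : α} (hab : a ≤ b) (ha : P a)
    (step : ∀ x, x ≤ b → x ≠ b → P x → ∃ y, x < y ∧ y ≤ b ∧ P y) : P b := by
  induction hn : (Finset.Icc a b).card using Nat.strong_induction_on generalizing a with
  | _ n ih =>
    by_cases hb : a = b
    · exact hb ▸ ha
    obtain ⟨y, hay, hyb, hy⟩ := step a hab hb ha
    exact ih _ (hn ▸ Finset.card_lt_card (Finset.Icc_ssubset_Icc_left hab hay le_rfl)) hyb hy rfl

section Observations

variable {S : Type*} {ξ : S → Prop} {t : ℕ → S}

theorem hasObsUpTo_iff_exists_count [DecidablePred ξ] {j : ℕ} :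
    HasObsUpTo ξ t j ↔ ∃ n, ξ (t n) ∧ Nat.count (fun m => ξ (t m)) n = j := by
  constructor
  · rintro ⟨f, hf, hξ⟩
    have hcard : ∀ hfin : (Set.ofPred fun m => ξ (t m)).Finite, j < hfin.toFinset.card := by
      intro hfin
      simpa using Finset.card_le_card_of_injOn f (s := Finset.univ) (t := hfin.toFinset)
        (fun i _ => by simpa using hξ i) hf.injective.injOn
    exact ⟨_, Nat.nth_mem j hcard, Nat.count_nth hcard⟩
  · rintro ⟨n, hn, rfl⟩
    have hcard : ∀ hfin : (Set.ofPred fun m => ξ (t m)).Finite,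
        Nat.count (fun m => ξ (t m)) n < hfin.toFinset.card := fun hfin => Nat.count_lt_card hfin hn
    exact ⟨fun i => Nat.nth _ i, fun a b hab => Nat.nth_lt_nth' hab fun hfin =>
      b.is_le.trans_lt (hcard hfin), fun i => Nat.nth_mem _ fun hfin => i.is_le.trans_lt (hcard hfin)⟩

theorem obsState_count [DecidablePred ξ] {n : ℕ} (hn : ξ (t n)) :
    obsState ξ t (Nat.count (fun m => ξ (t m)) n) = t n :=
  congrArg t (Nat.nth_count hn)

end Observations

namespace LTS

variable {S L : Type*} (T : LTS S L)

theorem exists_isTrace (s : S) : ∃ t, T.IsTrace t s := by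
  choose ℓ next hnext using T.total
  exact ⟨fun n => next^[n] s, rfl, fun n => ⟨ℓ _, by
    simpa only [Function.iterate_succ_apply'] using hnext _⟩⟩

variable {T}

theorem IsTrace.exists_splice {t : ℕ → S} {s s' : S} {ℓ : L} {n : ℕ} (ht : T.IsTrace t s)
    (hn : T.Tr (t n) ℓ s') : ∃ t', T.IsTrace t' s ∧ (∀ m ≤ n, t' m = t m) ∧ t' (n + 1) = s' := by
  obtain ⟨u, hu0, hu⟩ := T.exists_isTrace s'
  refine ⟨fun m => if m ≤ n then t m else u (m - (n + 1)), ⟨by simpa using ht.1, fun m => ?_⟩,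
    fun m hm => if_pos hm, by simpa using hu0⟩
  rcases lt_trichotomy m n with hm | rfl | hm
  · simpa [hm.le, Nat.succ_le_of_lt hm] using ht.2 m
  · exact ⟨ℓ, by simpa [hu0] using hn⟩
  · obtain ⟨ℓ', h⟩ := hu (m - (n + 1))
    exact ⟨ℓ', by simpa [hm.not_ge, show ¬ m + 1 ≤ n by omega,
      show m + 1 - (n + 1) = m - (n + 1) + 1 by omega] using h⟩

end LTS

structure IsKSafetyEncoding {S L : Type*} (T : LTS S L) {k : ℕ} (ψ : (Fin k → S) → Prop)
    (ξ : Fin k → S → Prop) (φ : (Fin k → S) → Prop) (Inv : (Fin k → S) → Prop)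
    (A : Sched k → (Fin k → S) → Prop) : Prop where
  init : ∀ sb, (∀ i, sb i ∈ T.Init) → ψ sb → Inv sb
  not_bad : ∀ sb, Inv sb → ¬ BadState ξ φ sb
  valid : ∀ (M : Sched k) sb, Inv sb → A M sb → ValidSched ξ M.val sb
  step : ∀ (M : Sched k) sb sb' ℓ, Inv sb → A M sb → ComposedStep T M.val ℓ sb sb' → Inv sb'
  progress : ∀ sb, Inv sb → ∃ M, A M sb

namespace IsKSafetyEncoding

variable {S L : Type*} {T : LTS S L} {k : ℕ} {ψ : (Fin k → S) → Prop} {ξ : Fin k → S → Prop}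
  {φ : (Fin k → S) → Prop} {Inv : (Fin k → S) → Prop} {A : Sched k → (Fin k → S) → Prop}
  {t : Fin k → ℕ → S} {N : Fin k → ℕ} {j : ℕ}

/-- The schedule `A` picks is valid: either it moves only components that are off their
observation points, or all components sit on their `m`-th observation point and `m < j`. -/
theorem exists_advance [∀ i, DecidablePred (ξ i)] (h : IsKSafetyEncoding T ψ ξ φ Inv A)
    (ht : ∀ i n, ∃ ℓ, T.Tr (t i n) ℓ (t i (n + 1))) (hξN : ∀ i, ξ i (t i (N i)))
    (hcN : ∀ i, Nat.count (fun n => ξ i (t i n)) (N i) = j) {pos : Fin k → ℕ} (hle : pos ≤ N)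
    (hne : pos ≠ N) (hInv : Inv fun i => t i (pos i)) {m : ℕ}
    (hm : ∀ i, Nat.count (fun n => ξ i (t i n)) (pos i) = m) :
    ∃ pos', pos < pos' ∧ pos' ≤ N ∧ (Inv fun i => t i (pos' i)) ∧
      ∃ m', ∀ i, Nat.count (fun n => ξ i (t i n)) (pos' i) = m' := by
  classical
  obtain ⟨M, hA⟩ := h.progress _ hInv
  let pos' : Fin k → ℕ := fun i => if i ∈ M.val then pos i + 1 else pos i
  have hstep : ComposedStep T M.val (fun i => (ht i (pos i)).choose)
      (fun i => t i (pos i)) (fun i => t i (pos' i)) :=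
    ⟨fun i hi => by simpa [pos', hi] using (ht i (pos i)).choose_spec,
      fun i hi => by simp [pos', hi]⟩
  have hlt : pos < pos' := Pi.lt_def.2 ⟨fun i => by simp only [pos']; split <;> omega,
    M.2.some, by simp [pos', M.2.some_mem]⟩
  have hInv' := h.step M _ _ _ hInv hA hstep
  rcases h.valid M _ hInv hA with hout | ⟨hM, hobs⟩
  · refine ⟨pos', hlt, fun i => ?_, hInv', m, fun i => ?_⟩
    · by_cases hi : i ∈ M.val
      · have : pos i ≠ N i := fun heq => hout i hi (by simpa [heq] using hξN i)
        simpa [pos', hi] using lt_of_le_of_ne (hle i) this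
      · simpa [pos', hi] using hle i
    · by_cases hi : i ∈ M.val <;> simp [pos', hi, Nat.count_succ, hout, hm]
  · obtain ⟨i₀, hi₀⟩ := Function.ne_iff.1 hne
    have hmj : m < j := hm i₀ ▸ hcN i₀ ▸
      Nat.count_strict_mono (hobs i₀) (lt_of_le_of_ne (hle i₀) hi₀)
    refine ⟨pos', hlt, fun i => ?_, hInv', m + 1, fun i => ?_⟩
    · simpa [pos', hM] using
        Nat.lt_of_count_lt_count ((hm i).trans_lt (hmj.trans_eq (hcN i).symm))
    · simp [pos', hM, Nat.count_succ, hobs, hm]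

theorem kSafetyModels (h : IsKSafetyEncoding T ψ ξ φ Inv A) : kSafetyModels T ψ ξ φ := by
  classical
  intro sb hinit hψ t ht j hobs
  choose N hξN hcN using fun i => hasObsUpTo_iff_exists_count.1 (hobs i)
  have hInv₀ : Inv fun i => t i 0 := by
    convert h.init sb hinit hψ using 1
    exact funext fun i => (ht i).1
  have hInvN : Inv fun i => t i (N i) :=
    (le_induction_of_exists_lt (P := fun pos => (Inv fun i => t i (pos i)) ∧
      ∃ m, ∀ i, Nat.count (fun n => ξ i (t i n)) (pos i) = m) (zero_le (a := N)) ⟨hInv₀, 0, by simp⟩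
      fun _ hle hne ⟨hInv, _, hm⟩ =>
        h.exists_advance (fun i => (ht i).2) hξN hcN hle hne hInv hm).1
  have hobsN : (fun i => obsState (ξ i) (t i) j) = fun i => t i (N i) :=
    funext fun i => hcN i ▸ obsState_count (hξN i)
  rw [hobsN]
  by_contra hφ
  exact h.not_bad _ hInvN ⟨hξN, hφ⟩

end IsKSafetyEncoding

namespace LTS

variable {S L : Type*} {T : LTS S L} {ξ : S → Prop}

open scoped Classical in
/-- `s'` is reached from `s` along a trace having met `c` observation points strictly before. -/
def ObsReach (T : LTS S L) (ξ : S → Prop) (c : ℕ) (s s' : S) : Prop :=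
  ∃ t n, T.IsTrace t s ∧ t n = s' ∧ Nat.count (fun m => ξ (t m)) n = c

theorem obsReach_zero (T : LTS S L) (ξ : S → Prop) (s : S) : T.ObsReach ξ 0 s s := by
  obtain ⟨t, ht⟩ := T.exists_isTrace s
  exact ⟨t, 0, ht, ht.1, by simp⟩

open scoped Classical in
theorem ObsReach.step {c : ℕ} {s s' s'' : S} {ℓ : L} (h : T.ObsReach ξ c s s')
    (hs' : T.Tr s' ℓ s'') : T.ObsReach ξ (c + if ξ s' then 1 else 0) s s'' := by
  obtain ⟨t, n, ht, rfl, rfl⟩ := h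
  obtain ⟨t', ht', hagree, hend⟩ := ht.exists_splice hs'
  refine ⟨t', n + 1, ht', hend, ?_⟩
  have hcount : Nat.count (fun m => ξ (t' m)) n = Nat.count (fun m => ξ (t m)) n :=
    (Nat.count_mono_left fun m hm => by simp [hagree m hm.le]).antisymm
      (Nat.count_mono_left fun m hm => by simp [hagree m hm.le])
  rw [Nat.count_succ, hcount, hagree n le_rfl]

theorem ObsReach.exists_obsState {c : ℕ} {s s' : S} (h : T.ObsReach ξ c s s') (hs' : ξ s') :
    ∃ t, T.IsTrace t s ∧ HasObsUpTo ξ t c ∧ obsState ξ t c = s' := by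
  classical
  obtain ⟨t, n, ht, rfl, rfl⟩ := h
  exact ⟨t, ht, hasObsUpTo_iff_exists_count.2 ⟨n, hs', rfl⟩, obsState_count hs'⟩

end LTS

section Completeness

variable {S L : Type*} {T : LTS S L} {k : ℕ} {ψ : (Fin k → S) → Prop} {ξ : Fin k → S → Prop}
  {φ : (Fin k → S) → Prop} {sb : Fin k → S}

def SyncReachable (T : LTS S L) (ψ : (Fin k → S) → Prop) (ξ : Fin k → S → Prop)
    (sb : Fin k → S) : Prop :=
  ∃ s₀ : Fin k → S, (∀ i, s₀ i ∈ T.Init) ∧ ψ s₀ ∧ ∃ c, ∀ i, T.ObsReach (ξ i) c (s₀ i) (sb i)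

theorem syncReachable_of_init (hinit : ∀ i, sb i ∈ T.Init) (hψ : ψ sb) :
    SyncReachable T ψ ξ sb :=
  ⟨sb, hinit, hψ, 0, fun i => T.obsReach_zero (ξ i) (sb i)⟩

theorem SyncReachable.step {M : Set (Fin k)} {ℓ : Fin k → L} {sb' : Fin k → S}
    (h : SyncReachable T ψ ξ sb) (hv : ValidSched ξ M sb) (hs : ComposedStep T M ℓ sb sb') :
    SyncReachable T ψ ξ sb' := by
  classical
  obtain ⟨s₀, hinit, hψ, c, hc⟩ := h
  obtain ⟨htr, hfix⟩ := hs
  refine ⟨s₀, hinit, hψ, ?_⟩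
  rcases hv with hout | ⟨rfl, hobs⟩
  · refine ⟨c, fun i => ?_⟩
    by_cases hi : i ∈ M
    · simpa [hout i hi] using (hc i).step (htr i hi)
    · exact hfix i hi ▸ hc i
  · exact ⟨c + 1, fun i => by simpa [hobs i] using (hc i).step (htr i trivial)⟩

theorem SyncReachable.not_bad (hmod : kSafetyModels T ψ ξ φ) (h : SyncReachable T ψ ξ sb) :
    ¬ BadState ξ φ sb := by
  rintro ⟨hobs, hφ⟩
  obtain ⟨s₀, hinit, hψ, c, hc⟩ := h
  choose t ht hobsUpTo hsb using fun i => (hc i).exists_obsState (hobs i)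
  exact hφ (funext hsb ▸ hmod s₀ hinit hψ t ht c hobsUpTo)

theorem exists_validSched (hk : 1 ≤ k) (ξ : Fin k → S → Prop) (sb : Fin k → S) :
    ∃ M : Sched k, ValidSched ξ M.val sb := by
  by_cases hall : ∀ i, ξ i (sb i)
  · exact ⟨⟨Set.univ, ⟨0, hk⟩, trivial⟩, Or.inr ⟨rfl, hall⟩⟩
  · obtain ⟨i, hi⟩ := not_forall.1 hall
    exact ⟨⟨{i | ¬ ξ i (sb i)}, i, hi⟩, Or.inl fun _ hj => hj⟩

theorem isKSafetyEncoding_of_kSafetyModels (hk : 1 ≤ k) (hmod : kSafetyModels T ψ ξ φ) :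
    IsKSafetyEncoding T ψ ξ φ (SyncReachable T ψ ξ) fun M sb => ValidSched ξ M.val sb where
  init _ := syncReachable_of_init
  not_bad _ h := h.not_bad hmod
  valid _ _ _ hv := hv
  step _ _ _ _ h hv hs := h.step hv hs
  progress sb _ := exists_validSched hk ξ sb

end Completeness

theorem kSafety_fol_encoding {S L : Type*} (T : LTS S L) {k : ℕ} (hk : 1 ≤ k)
    (ψ : (Fin k → S) → Prop) (ξ : Fin k → S → Prop) (φ : (Fin k → S) → Prop) :
    (∃ (Inv : (Fin k → S) → Prop) (A : Sched k → (Fin k → S) → Prop),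
      (∀ sb, (∀ i, sb i ∈ T.Init) → ψ sb → Inv sb) ∧
      (∀ sb, Inv sb → ¬ BadState ξ φ sb) ∧
      (∀ (M : Sched k) sb, Inv sb → A M sb → ValidSched ξ M.val sb) ∧
      (∀ (M : Sched k) sb sb' ℓ, Inv sb → A M sb →
        ComposedStep T M.val ℓ sb sb' → Inv sb') ∧
      (∀ sb, Inv sb → ∃ M, A M sb)) ↔
    kSafetyModels T ψ ξ φ := by
  constructor
  · rintro ⟨Inv, A, hinit, hbad, hvalid, hstep, hprogress⟩
    exact IsKSafetyEncoding.kSafetyModels ⟨hinit, hbad, hvalid, hstep, hprogress⟩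
  · intro hmod
    obtain ⟨hinit, hbad, hvalid, hstep, hprogress⟩ := isKSafetyEncoding_of_kSafetyModels hk hmod
    exact ⟨_, _, hinit, hbad, hvalid, hstep, hprogress⟩
end

section
/- Let TS be a semantic labeled transition system with total transition relation, and fix a k-safety specification φ̂ given by ψ, (ξ i), φ. Then TS ⊨ φ̂ if and only if there exist a valid arbiter 𝒜 and a set Inv of composed states such that: (i) every s̄ with s̄ i ∈ Init for all i and ψ s̄ belongs to Inv; (ii) Inv is closed under the transitions of TS^k_𝒜 (if s̄ ∈ Inv and s̄ ↝[M,ℓ̄] s̄' for some M ∈ 𝒜(s̄) and some ℓ̄, then s̄' ∈ Inv); and (iii) every s̄ ∈ Inv satisfies ¬ Bad(s̄). -/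
/-- The transition relation of the composed transition system `TS^k_𝒜`. -/
def CompTrans {S L : Type*} (T : LTS S L) {k : ℕ}
    (Arb : (Fin k → S) → Set (Sched k)) (sb sb' : Fin k → S) : Prop :=
  ∃ M ∈ Arb sb, ∃ ℓ, ComposedStep T M.val ℓ sb sb'

/-- `s̄` is ψ-reachable in the composed transition system `TS^k_𝒜`. -/
def PsiReachable {S L : Type*} (T : LTS S L) {k : ℕ} (ψ : (Fin k → S) → Prop)
    (Arb : (Fin k → S) → Set (Sched k)) (sb : Fin k → S) : Prop :=
  ∃ sb0, (∀ i, sb0 i ∈ T.Init) ∧ ψ sb0 ∧ Relation.ReflTransGen (CompTrans T Arb) sb0 sb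

/-- The arbiter `𝒜` is valid for `TS` and `φ̂`. -/
def ValidArbiter {S L : Type*} (T : LTS S L) {k : ℕ} (ψ : (Fin k → S) → Prop)
    (ξ : Fin k → S → Prop) (Arb : (Fin k → S) → Set (Sched k)) : Prop :=
  ∀ sb, PsiReachable T ψ Arb sb →
    (Arb sb).Nonempty ∧ ∀ M ∈ Arb sb, ValidSched ξ M.val sb


section ArbiterAux

/-- Counts of two predicates agreeing below `n` coincide. -/
lemma count_congr_below {p q : ℕ → Prop} [DecidablePred p] [DecidablePred q] {n : ℕ}
    (h : ∀ m < n, (p m ↔ q m)) : Nat.count p n = Nat.count q n := by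
  rw [Nat.count_eq_card_filter_range, Nat.count_eq_card_filter_range]
  congr 1
  apply Finset.filter_congr
  intro x hx
  simp [h x (Finset.mem_range.mp hx)]

/-- A choice of successor state, using totality. -/
noncomputable def LTS.nxt {S L : Type*} (T : LTS S L) (s : S) : S :=
  (T.total s).choose_spec.choose

lemma LTS.nxt_spec {S L : Type*} (T : LTS S L) (s : S) : ∃ ℓ, T.Tr s ℓ (T.nxt s) :=
  ⟨(T.total s).choose, (T.total s).choose_spec.choose_spec⟩

/-- An arbitrary infinite continuation from a state. -/
noncomputable def LTS.ext {S L : Type*} (T : LTS S L) (s : S) : ℕ → S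
  | 0 => s
  | n + 1 => T.nxt (T.ext s n)

lemma hasObs_card {S : Type*} {ξ : S → Prop} {t : ℕ → S} {j : ℕ}
    (h : HasObsUpTo ξ t j) (hf : {n | ξ (t n)}.Finite) : j < hf.toFinset.card := by
  obtain ⟨f, hmono, hobs⟩ := h
  have hsub : (Finset.univ.image f).card ≤ hf.toFinset.card := by
    apply Finset.card_le_card
    intro x hx
    simp only [Finset.mem_image, Finset.mem_univ, true_and] at hx
    obtain ⟨i, rfl⟩ := hx
    simpa using hobs i
  rw [Finset.card_image_of_injective _ hmono.injective, Finset.card_univ, Fintype.card_fin] at hsub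
  omega

end ArbiterAux

theorem kSafety_iff_arbiter_invariant {S L : Type*} (T : LTS S L) {k : ℕ} (hk : 1 ≤ k)
    (ψ : (Fin k → S) → Prop) (ξ : Fin k → S → Prop) (φ : (Fin k → S) → Prop) :
    kSafetyModels T ψ ξ φ ↔
      ∃ (Arb : (Fin k → S) → Set (Sched k)) (Inv : Set (Fin k → S)),
        ValidArbiter T ψ ξ Arb ∧
        (∀ sb, (∀ i, sb i ∈ T.Init) → ψ sb → sb ∈ Inv) ∧
        (∀ sb sb', sb ∈ Inv → CompTrans T Arb sb sb' → sb' ∈ Inv) ∧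
        (∀ sb ∈ Inv, ¬ BadState ξ φ sb) := by
  classical
  constructor
  · -- From k-safety, build the arbiter of all valid schedules and Inv = reachable states.
    intro hmodels
    set Arb : (Fin k → S) → Set (Sched k) := fun sb => {M | ValidSched ξ M.val sb} with hArbdef
    refine ⟨Arb, {sb | PsiReachable T ψ Arb sb}, ?_, ?_, ?_, ?_⟩
    · intro sb _
      constructor
      · by_cases h : ∀ i, ξ i (sb i)
        · exact ⟨⟨Set.univ, ⟨⟨0, hk⟩, trivial⟩⟩, Or.inr ⟨rfl, h⟩⟩
        · push_neg at h
          obtain ⟨i, hi⟩ := h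
          exact ⟨⟨{i}, Set.singleton_nonempty i⟩,
            Or.inl fun j hj => by rwa [Set.mem_singleton_iff.mp hj]⟩
      · intro M hM; exact hM
    · intro sb h1 h2; exact ⟨sb, h1, h2, .refl⟩
    · rintro sb sb' ⟨sb0, h1, h2, h3⟩ hstep; exact ⟨sb0, h1, h2, h3.tail hstep⟩
    · rintro sb ⟨sb0, hinit, hψ, hrun⟩ ⟨hξ, hφ⟩
      -- build partial synchronized traces along the run
      have key : ∀ sb', Relation.ReflTransGen (CompTrans T Arb) sb0 sb' →
          ∃ (t : Fin k → ℕ → S) (m : Fin k → ℕ) (cnt : ℕ),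
            (∀ i, t i 0 = sb0 i) ∧
            (∀ i, ∀ n < m i, ∃ ℓ, T.Tr (t i n) ℓ (t i (n + 1))) ∧
            (∀ i, t i (m i) = sb' i) ∧
            (∀ i, Nat.count (fun n => ξ i (t i n)) (m i) = cnt) := by
        intro sb' hrun'
        induction hrun' with
        | refl =>
          exact ⟨fun i _ => sb0 i, fun _ => 0, 0, fun i => rfl,
            fun i n hn => absurd hn (Nat.not_lt_zero n), fun i => rfl,
            fun i => Nat.count_zero _⟩
        | @tail b c hab hbc ih =>
          obtain ⟨t, m, cnt, h0, htr, hend, hcount⟩ := ih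
          obtain ⟨M, hM, ℓ, hstep⟩ := hbc
          have hMv : ValidSched ξ M.val b := hM
          set t' : Fin k → ℕ → S := fun i n => if n ≤ m i then t i n else c i with ht'
          set m' : Fin k → ℕ := fun i => if i ∈ M.val then m i + 1 else m i with hm'
          have H0 : ∀ i, t' i 0 = sb0 i := fun i => by
            simp only [ht', if_pos (Nat.zero_le _)]; exact h0 i
          have Hmid : ∀ i, t' i (m i) = b i := fun i => by
            simp only [ht', le_refl, if_pos]; exact hend i
          have Htr : ∀ i, ∀ n < m' i, ∃ ℓ', T.Tr (t' i n) ℓ' (t' i (n + 1)) := by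
            intro i n hn
            by_cases him : i ∈ M.val
            · rw [hm'] at hn; simp only [if_pos him] at hn
              rcases Nat.lt_succ_iff_lt_or_eq.mp hn with h | heq
              · have h1 : t' i n = t i n := by
                  simp only [ht', if_pos (Nat.le_of_lt h)]
                have h2 : t' i (n + 1) = t i (n + 1) := by
                  simp only [ht', if_pos (Nat.succ_le_of_lt h)]
                rw [h1, h2]; exact htr i n h
              · rw [heq]
                refine ⟨ℓ i, ?_⟩
                have h2 : t' i (m i + 1) = c i := by
                  simp only [ht', if_neg (Nat.not_succ_le_self (m i))]
                rw [Hmid i, h2]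
                exact hstep.1 i him
            · rw [hm'] at hn; simp only [if_neg him] at hn
              have h1 : t' i n = t i n := by
                simp only [ht', if_pos (Nat.le_of_lt hn)]
              have h2 : t' i (n + 1) = t i (n + 1) := by
                simp only [ht', if_pos (Nat.succ_le_of_lt hn)]
              rw [h1, h2]; exact htr i n hn
          have Hend : ∀ i, t' i (m' i) = c i := by
            intro i
            by_cases him : i ∈ M.val
            · simp only [hm', if_pos him, ht', if_neg (Nat.not_succ_le_self (m i))]
            · simp only [hm', if_neg him]
              rw [Hmid i, hstep.2 i him]
          have Hagree : ∀ i, Nat.count (fun n => ξ i (t' i n)) (m i) = cnt := by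
            intro i
            rw [← hcount i]
            apply count_congr_below
            intro n hn
            simp only [ht', if_pos (Nat.le_of_lt hn)]
          rcases hMv with hA | ⟨hU, hall⟩
          · refine ⟨t', m', cnt, H0, Htr, Hend, ?_⟩
            intro i
            by_cases him : i ∈ M.val
            · simp only [hm', if_pos him]
              rw [Nat.count_succ, Hagree i, if_neg (by rw [Hmid i]; exact hA i him)]
              omega
            · simp only [hm', if_neg him]; exact Hagree i
          · refine ⟨t', m', cnt + 1, H0, Htr, Hend, ?_⟩
            intro i
            have him : i ∈ M.val := hU ▸ Set.mem_univ i
            simp only [hm', if_pos him]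
            rw [Nat.count_succ, Hagree i, if_pos (by rw [Hmid i]; exact hall i)]
      obtain ⟨t, m, cnt, h0, htr, hend, hcount⟩ := key sb hrun
      -- extend to full traces
      set t'' : Fin k → ℕ → S := fun i n => if n ≤ m i then t i n else T.ext (sb i) (n - m i)
        with ht''
      have htrace : ∀ i, T.IsTrace (t'' i) (sb0 i) := by
        intro i
        constructor
        · simp only [ht'', if_pos (Nat.zero_le _)]; exact h0 i
        · intro n
          rcases lt_trichotomy n (m i) with h | rfl | h
          · have h1 : t'' i n = t i n := by simp only [ht'', if_pos (Nat.le_of_lt h)]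
            have h2 : t'' i (n + 1) = t i (n + 1) := by
              simp only [ht'', if_pos (Nat.succ_le_of_lt h)]
            rw [h1, h2]; exact htr i n h
          · have e1 : t'' i (m i) = sb i := by
              simp only [ht'', le_refl, if_pos]; exact hend i
            have e2 : t'' i (m i + 1) = T.nxt (sb i) := by
              simp only [ht'', if_neg (Nat.not_succ_le_self (m i)), Nat.add_sub_cancel_left]
              rfl
            rw [e1, e2]; exact T.nxt_spec (sb i)
          · have e1 : t'' i n = T.ext (sb i) (n - m i) := by
              simp only [ht'', if_neg (Nat.not_le.mpr h)]
            have e2 : t'' i (n + 1) = T.nxt (T.ext (sb i) (n - m i)) := by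
              have hn1 : ¬ (n + 1 ≤ m i) := by omega
              have hn2 : n + 1 - m i = (n - m i) + 1 := by omega
              simp only [ht'', if_neg hn1, hn2]
              rfl
            rw [e1, e2]; exact T.nxt_spec _
      have hend'' : ∀ i, t'' i (m i) = sb i := by
        intro i; simp only [ht'', le_refl, if_pos]; exact hend i
      have hpm : ∀ i, ξ i (t'' i (m i)) := by
        intro i; rw [hend'' i]; exact hξ i
      have hcnt'' : ∀ i, Nat.count (fun n => ξ i (t'' i n)) (m i) = cnt := by
        intro i
        rw [← hcount i]
        apply count_congr_below
        intro n hn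
        simp only [ht'', if_pos (Nat.le_of_lt hn)]
      have hobs : ∀ i, HasObsUpTo (ξ i) (t'' i) cnt := by
        intro i
        set F : Finset ℕ :=
          insert (m i) ((Finset.range (m i)).filter (fun n => ξ i (t'' i n))) with hF
        have hcard : F.card = cnt + 1 := by
          rw [hF, Finset.card_insert_of_notMem (by simp), ← Nat.count_eq_card_filter_range,
            hcnt'' i]
        refine ⟨fun r => (F.orderIsoOfFin hcard r : ℕ), ?_, ?_⟩
        · intro a b hab
          exact_mod_cast (F.orderIsoOfFin hcard).strictMono hab
        · intro r
          have hmem : ((F.orderIsoOfFin hcard r : ℕ)) ∈ F := (F.orderIsoOfFin hcard r).2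
          show ξ i (t'' i ((F.orderIsoOfFin hcard r : ℕ)))
          rcases Finset.mem_insert.mp hmem with h | h
          · rw [h]; exact hpm i
          · exact (Finset.mem_filter.mp h).2
      have hres := hmodels sb0 hinit hψ t'' htrace cnt hobs
      apply hφ
      have heq : (fun i => obsState (ξ i) (t'' i) cnt) = sb := by
        funext i
        have hnth : Nat.nth (fun n => ξ i (t'' i n)) cnt = m i := by
          conv_lhs => rw [← hcnt'' i]
          exact Nat.nth_count (hpm i)
        rw [obsState, hnth, hend'' i]
      rwa [heq] at hres
  · -- From an arbiter + invariant, derive k-safety.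
    rintro ⟨Arb, Inv, hvalid, hinitInv, hclosed, hsafe⟩
    intro sb hinit hψ t htrace j hobs
    by_contra hφ
    set p : Fin k → ℕ → Prop := fun i n => ξ i (t i n) with hp
    have hcard : ∀ i (hf : (setOf (p i)).Finite), j < hf.toFinset.card := fun i hf =>
      hasObs_card (hobs i) hf
    set N : Fin k → ℕ := fun i => Nat.nth (p i) j with hNdef
    have hpN : ∀ i, p i (N i) := fun i => Nat.nth_mem j (hcard i)
    have hInvR : ∀ sb', PsiReachable T ψ Arb sb' → sb' ∈ Inv := by
      rintro sb' ⟨sb0, h1, h2, h3⟩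
      induction h3 with
      | refl => exact hinitInv sb0 h1 h2
      | tail hab hbc ih => exact hclosed _ _ ih hbc
    -- the composed run along the traces reaches the tuple of j-th observation points
    have key : ∀ d (n : Fin k → ℕ), (∑ i, (N i - n i)) ≤ d →
        (∀ i, n i ≤ N i) → (∃ cnt ≤ j, ∀ i, Nat.count (p i) (n i) = cnt) →
        PsiReachable T ψ Arb (fun i => t i (n i)) →
        Relation.ReflTransGen (CompTrans T Arb) (fun i => t i (n i)) (fun i => t i (N i)) := by
      intro d
      induction d with
      | zero =>
        intro n hsum hle _ _
        have heq : (fun i => t i (n i)) = fun i => t i (N i) := by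
          funext i
          have h0 := Finset.sum_eq_zero_iff.mp (Nat.le_zero.mp hsum) i (Finset.mem_univ i)
          have := hle i
          have : n i = N i := by omega
          rw [this]
        rw [heq]
      | succ d ih =>
        intro n hsum hle hcnt hreach
        by_cases hdone : ∀ i, n i = N i
        · have heq : (fun i => t i (n i)) = fun i => t i (N i) := by
            funext i; rw [hdone i]
          rw [heq]
        · obtain ⟨cnt, hcj, hc⟩ := hcnt
          obtain ⟨⟨M, hM⟩, hvalid'⟩ := hvalid _ hreach
          have hMv : ValidSched ξ M.val (fun i => t i (n i)) := hvalid' M hM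
          have hlab : ∀ i, ∃ ℓ, T.Tr (t i (n i)) ℓ (t i (n i + 1)) := fun i =>
            (htrace i).2 (n i)
          choose ℓ hℓ using hlab
          rcases hMv with hA | ⟨hU, hall⟩
          · set n' : Fin k → ℕ := fun i => if i ∈ M.val then n i + 1 else n i with hn'
            have hstep : CompTrans T Arb (fun i => t i (n i)) (fun i => t i (n' i)) := by
              refine ⟨M, hM, ℓ, fun i hi => ?_, fun i hi => ?_⟩
              · simp only [hn', if_pos hi]; exact hℓ i
              · simp only [hn', if_neg hi]
            have hltM : ∀ i ∈ M.val, n i < N i := by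
              intro i hi
              rcases Nat.lt_or_ge (n i) (N i) with h | h
              · exact h
              · exfalso
                have hni : n i = N i := le_antisymm (hle i) h
                exact hA i hi (by show ξ i (t i (n i)); rw [hni]; exact hpN i)
            have hle' : ∀ i, n' i ≤ N i := by
              intro i
              by_cases hi : i ∈ M.val
              · simp only [hn', if_pos hi]; exact hltM i hi
              · simp only [hn', if_neg hi]; exact hle i
            have hc' : ∀ i, Nat.count (p i) (n' i) = cnt := by
              intro i
              by_cases hi : i ∈ M.val
              · simp only [hn', if_pos hi]
                rw [Nat.count_succ, hc i, if_neg (hA i hi)]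
                omega
              · simp only [hn', if_neg hi]; exact hc i
            have hsum' : (∑ i, (N i - n' i)) ≤ d := by
              obtain ⟨i0, hi0⟩ := M.2
              have hlt : (∑ i, (N i - n' i)) < ∑ i, (N i - n i) := by
                apply Finset.sum_lt_sum
                · intro i _
                  by_cases hi : i ∈ M.val <;> simp only [hn', hi, if_true, if_false] <;> omega
                · refine ⟨i0, Finset.mem_univ i0, ?_⟩
                  have := hltM i0 hi0
                  simp only [hn', if_pos hi0]
                  omega
              omega
            have hreach' : PsiReachable T ψ Arb (fun i => t i (n' i)) := by
              obtain ⟨sb0, a, b, cc⟩ := hreach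
              exact ⟨sb0, a, b, cc.tail hstep⟩
            exact .head hstep (ih n' hsum' hle' ⟨cnt, hcj, hc'⟩ hreach')
          · have hallp : ∀ i, p i (n i) := hall
            by_cases hcj' : cnt = j
            · exfalso
              apply hdone
              intro i
              have hh := Nat.nth_count (p := p i) (hallp i)
              rw [hc i, hcj'] at hh
              exact hh.symm
            · have hcltj : cnt < j := lt_of_le_of_ne hcj hcj'
              set n' : Fin k → ℕ := fun i => n i + 1 with hn'
              have hstep : CompTrans T Arb (fun i => t i (n i)) (fun i => t i (n' i)) :=
                ⟨M, hM, ℓ, fun i _ => hℓ i, fun i hi => absurd (hU ▸ Set.mem_univ i) hi⟩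
              have hlt : ∀ i, n i < N i := by
                intro i
                have hni : n i = Nat.nth (p i) cnt := by
                  have := Nat.nth_count (p := p i) (hallp i)
                  rw [hc i] at this
                  exact this.symm
                rw [hni, hNdef]
                exact Nat.nth_lt_nth' hcltj (hcard i)
              have hle' : ∀ i, n' i ≤ N i := fun i => hlt i
              have hc' : ∀ i, Nat.count (p i) (n' i) = cnt + 1 := by
                intro i
                rw [hn']
                simp only []
                rw [Nat.count_succ, hc i, if_pos (hallp i)]
              have hsum' : (∑ i, (N i - n' i)) ≤ d := by
                have hlt2 : (∑ i, (N i - n' i)) < ∑ i, (N i - n i) := by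
                  apply Finset.sum_lt_sum
                  · intro i _; simp only [hn']; omega
                  · refine ⟨⟨0, hk⟩, Finset.mem_univ _, ?_⟩
                    have := hlt ⟨0, hk⟩
                    simp only [hn']
                    omega
                omega
              have hreach' : PsiReachable T ψ Arb (fun i => t i (n' i)) := by
                obtain ⟨sb0, a, b, cc⟩ := hreach
                exact ⟨sb0, a, b, cc.tail hstep⟩
              exact .head hstep (ih n' hsum' hle' ⟨cnt + 1, hcltj, hc'⟩ hreach')
    have hreach0 : PsiReachable T ψ Arb (fun i => t i 0) := by
      have heq : (fun i => t i 0) = sb := funext fun i => (htrace i).1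
      rw [heq]
      exact ⟨sb, hinit, hψ, .refl⟩
    have hrun := key (∑ i, (N i - 0)) (fun _ => 0) le_rfl (fun i => Nat.zero_le _)
      ⟨0, Nat.zero_le _, fun i => Nat.count_zero _⟩ hreach0
    have htgt : PsiReachable T ψ Arb (fun i => t i (N i)) := by
      obtain ⟨sb0', a, b, cc⟩ := hreach0
      exact ⟨sb0', a, b, cc.trans hrun⟩
    refine hsafe _ (hInvR _ htgt) ⟨fun i => hpN i, ?_⟩
    exact hφ
end

section
/- Let TS be a deterministic semantic labeled transition system with total transition relation, and fix a ∀^l∃^(k−l) hyperproperty specification φ̂ given by ψ, (ξ i), φ. If TS ⊨g φ̂ (the verifier has a winning memoryless strategy in the verification game G(TS, φ̂)), then TS ⊨ φ̂ under the ∀∃ trace semantics. -/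
/-- Concatenation `ℓ∀·ℓ∃ : Fin k → α` of `a : Fin l → α` and `b : Fin (k - l) → α`. -/
def finSplice {α : Type*} {l k : ℕ} (h : l ≤ k) (a : Fin l → α) (b : Fin (k - l) → α) :
    Fin k → α :=
  fun i => if h' : (i : ℕ) < l then a ⟨(i : ℕ), h'⟩
           else b ⟨(i : ℕ) - l, by have := i.isLt; omega⟩

/-- Game states: falsifier states (left) and verifier states (right). -/
abbrev GState (k l : ℕ) (S L : Type*) := (Fin k → S) ⊕ ((Fin k → S) × (Fin l → L))

/-- A move of the falsifier: from `s̄` to `(s̄, ℓ∀)` for any `ℓ∀`. -/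
def FalsMove {k l : ℕ} {S L : Type*} (g g' : GState k l S L) : Prop :=
  ∃ sb lf, g = Sum.inl sb ∧ g' = Sum.inr (sb, lf)

/-- A move of the verifier: from `(s̄, ℓ∀)` to any `s̄'` with `s̄ ↝[M, ℓ∀·ℓ∃] s̄'`
for some schedule `M` valid for `s̄` and some `ℓ∃`. -/
def VerMove {S L : Type*} (T : LTS S L) {k l : ℕ} (h : l ≤ k) (ξ : Fin k → S → Prop)
    (g g' : GState k l S L) : Prop :=
  ∃ sb lf sb', g = Sum.inr (sb, lf) ∧ g' = Sum.inl sb' ∧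
    ∃ M : Set (Fin k), M.Nonempty ∧ ValidSched ξ M sb ∧
      ∃ le : Fin (k - l) → L, ComposedStep T M (finSplice h lf le) sb sb'

/-- `ρ` is a play of the verification game `G(TS, φ̂)`. -/
def IsPlay {S L : Type*} (T : LTS S L) {k l : ℕ} (h : l ≤ k)
    (ψ : (Fin k → S) → Prop) (ξ : Fin k → S → Prop) (ρ : ℕ → GState k l S L) : Prop :=
  (∃ sb, ρ 0 = Sum.inl sb ∧ (∀ i, sb i ∈ T.Init) ∧ ψ sb) ∧
  ∀ n, FalsMove (ρ n) (ρ (n + 1)) ∨ VerMove T h ξ (ρ n) (ρ (n + 1))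

/-- The play `ρ` follows the memoryless verifier strategy `χ`. -/
def Follows {k l : ℕ} {S L : Type*} (χ : (Fin k → S) × (Fin l → L) → (Fin k → S))
    (ρ : ℕ → GState k l S L) : Prop :=
  ∀ n q, ρ n = Sum.inr q → ρ (n + 1) = Sum.inl (χ q)

/-- `TS ⊨g φ̂`: the verifier has a winning memoryless strategy in `G(TS, φ̂)`. -/
def ModelsGame {S L : Type*} (T : LTS S L) {k l : ℕ} (h : l ≤ k)
    (ψ : (Fin k → S) → Prop) (ξ : Fin k → S → Prop) (φ : (Fin k → S) → Prop) : Prop :=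
  ∃ χ : (Fin k → S) × (Fin l → L) → (Fin k → S),
    (∀ q, VerMove T h ξ (Sum.inr q) (Sum.inl (χ q))) ∧
    ∀ ρ : ℕ → GState k l S L, IsPlay T h ψ ξ ρ → Follows χ ρ →
      ∀ n sb, ρ n = Sum.inl sb → ¬ BadState ξ φ sb

/-- `TS` is deterministic. -/
def LTS.Deterministic {S L : Type*} (T : LTS S L) : Prop :=
  ∀ s ℓ, ∃! s', T.Tr s ℓ s'

/-- `TS ⊨ φ̂` under the `∀^l ∃^(k-l)` trace semantics. -/
def ModelsAE {S L : Type*} (T : LTS S L) {k l : ℕ} (h : l ≤ k)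
    (ψ : (Fin k → S) → Prop) (ξ : Fin k → S → Prop) (φ : (Fin k → S) → Prop) : Prop :=
  ∀ sb : Fin k → S, (∀ i, sb i ∈ T.Init) → ψ sb →
    ∀ tA : Fin l → ℕ → S, (∀ i : Fin l, T.IsTrace (tA i) (sb (Fin.castLE h i))) →
      ∃ tE : Fin (k - l) → ℕ → S,
        (∀ i : Fin (k - l),
          T.IsTrace (tE i) (sb ⟨l + (i : ℕ), by have := i.isLt; omega⟩)) ∧
        ∀ j : ℕ, (∀ i : Fin k, HasObsUpTo (ξ i) (finSplice h tA tE i) j) →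
          φ (fun i => obsState (ξ i) (finSplice h tA tE i) j)

/-!
Fix the initial states and the universal traces. In the run where the falsifier always offers,
for each universal component, the label its trace takes at the number of steps that component has
made so far, and the verifier answers by its winning strategy, determinism forces the universal
components to follow the given traces, and the existential components, with their stuttering
removed, are traces as well. Valid schedules keep observations in lockstep: when every component
observes, all advance together, and otherwise only non-observing components move. So the `j`-th
round in which all components observe consists of the `j`-th observation states; it exists as
soon as every trace has `j + 1` observation points, and, being a state of a play won by the
verifier, it is not bad, so `φ` holds there.
-/

open Finset

lemma eq_of_count_eq_of_stutter {S : Type*} {x : ℕ → S} {b : ℕ → Prop} [DecidablePred b]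
    (hstay : ∀ n, ¬ b n → x (n + 1) = x n) {n m : ℕ} (hnm : n ≤ m)
    (hc : Nat.count b n = Nat.count b m) : x n = x m := by
  induction m, hnm using Nat.le_induction with
  | base => rfl
  | succ m hnm ih =>
    have hle := Nat.count_monotone b hnm
    have hle' := Nat.count_monotone b (Nat.le_add_right m 1)
    have hbm : ¬ b m := Nat.count_succ_eq_count_iff.1 (by omega)
    rw [hstay m hbm]
    exact ih (by omega)

namespace LTS

variable {S L : Type*} (T : LTS S L)

noncomputable def next (s : S) : S :=
  (T.total s).choose_spec.choose

lemma exists_tr_next (s : S) : ∃ ℓ, T.Tr s ℓ (T.next s) :=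
  ⟨_, (T.total s).choose_spec.choose_spec⟩

open Classical in
/-- The trace read off a sequence `x` that advances exactly when the counter `c` increments:
position `p` is the state at the first time `c` reaches `p`, and positions that `c` never
reaches are filled in by `T.next`. -/
noncomputable def destutter (x : ℕ → S) (c : ℕ → ℕ) : ℕ → S
  | 0 => x 0
  | p + 1 => if ∃ n, c n = p + 1 then x (sInf {n | c n = p + 1}) else T.next (destutter x c p)

variable {T} {x : ℕ → S} {b : ℕ → Prop} [DecidablePred b]

lemma destutter_succ_of_forall_ne {c : ℕ → ℕ} {p : ℕ} (hp : ∀ n, c n ≠ p + 1) :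
    T.destutter x c (p + 1) = T.next (T.destutter x c p) := by
  rw [destutter, if_neg (not_exists.2 hp)]

lemma destutter_count (hstay : ∀ n, ¬ b n → x (n + 1) = x n) (n : ℕ) :
    T.destutter x (Nat.count b) (Nat.count b n) = x n := by
  rcases hcn : Nat.count b n with _ | p
  · exact eq_of_count_eq_of_stutter hstay (Nat.zero_le n) (by rw [Nat.count_zero, hcn])
  · have hp : ∃ m, Nat.count b m = p + 1 := ⟨n, hcn⟩
    rw [destutter, if_pos hp]
    exact eq_of_count_eq_of_stutter hstay (Nat.sInf_le hcn) ((Nat.sInf_mem hp).trans hcn.symm)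

lemma isTrace_destutter (hstay : ∀ n, ¬ b n → x (n + 1) = x n)
    (hmove : ∀ n, b n → ∃ ℓ, T.Tr (x n) ℓ (x (n + 1))) :
    T.IsTrace (T.destutter x (Nat.count b)) (x 0) := by
  refine ⟨rfl, fun p => ?_⟩
  by_cases hp : ∃ n, Nat.count b n = p + 1
  · obtain ⟨n, hn⟩ := hp
    have hlt : ∀ hf : (Set.ofPred b).Finite, p < #hf.toFinset :=
      fun hf => by have := Nat.count_le_card hf n; omega
    have hcur := destutter_count (T := T) hstay (Nat.nth b p)
    have hsucc := destutter_count (T := T) hstay (Nat.nth b p + 1)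
    rw [Nat.count_nth hlt] at hcur
    rw [Nat.count_nth_succ hlt] at hsucc
    rw [hcur, hsucc]
    exact hmove _ (Nat.nth_mem p hlt)
  · rw [destutter_succ_of_forall_ne (not_exists.1 hp)]
    exact T.exists_tr_next _

lemma eq_count_of_deterministic (hdet : T.Deterministic) {t : ℕ → S} {lab : ℕ → L}
    (ht : ∀ p, T.Tr (t p) (lab p) (t (p + 1))) (h0 : x 0 = t 0)
    (hstay : ∀ n, ¬ b n → x (n + 1) = x n)
    (hmove : ∀ n, b n → T.Tr (x n) (lab (Nat.count b n)) (x (n + 1))) (n : ℕ) :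
    x n = t (Nat.count b n) := by
  induction n with
  | zero => rwa [Nat.count_zero]
  | succ n ih =>
    by_cases hbn : b n
    · rw [Nat.count_succ, if_pos hbn]
      have hx := hmove n hbn
      rw [ih] at hx
      exact (hdet _ _).unique hx (ht _)
    · rw [Nat.count_succ, if_neg hbn, add_zero, hstay n hbn, ih]

end LTS

section Splice

variable {α : Type*} {k l : ℕ} (h : l ≤ k)

lemma finSplice_castLE (a : Fin l → α) (b : Fin (k - l) → α) (i : Fin l) :
    finSplice h a b (Fin.castLE h i) = a i := by
  simp [finSplice]

lemma forall_finSplice {a : Fin l → α} {b : Fin (k - l) → α} {P : Fin k → α → Prop}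
    (ha : ∀ i, P (Fin.castLE h i) (a i))
    (hb : ∀ i : Fin (k - l), P ⟨l + (i : ℕ), by have := i.isLt; omega⟩ (b i)) (i : Fin k) :
    P i (finSplice h a b i) := by
  unfold finSplice
  split_ifs with hi
  · exact ha ⟨i, hi⟩
  · have := hb ⟨i - l, by omega⟩
    simpa only [Nat.add_sub_cancel' (not_lt.1 hi)] using this

end Splice

lemma exists_traces_eq_run {S L : Type*} {T : LTS S L} (hdet : T.Deterministic) {k l : ℕ}
    (h : l ≤ k) {σ : ℕ → Fin k → S} {M : ℕ → Set (Fin k)} [∀ i n, Decidable (i ∈ M n)]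
    {ℓ : ℕ → Fin k → L} (hstay : ∀ n i, i ∉ M n → σ (n + 1) i = σ n i)
    (hmove : ∀ n i, i ∈ M n → T.Tr (σ n i) (ℓ n i) (σ (n + 1) i))
    {tA : Fin l → ℕ → S} {lab : Fin l → ℕ → L} (htA : ∀ i p, T.Tr (tA i p) (lab i p) (tA i (p + 1)))
    (h0 : ∀ i, tA i 0 = σ 0 (Fin.castLE h i))
    (hlab : ∀ n i, ℓ n (Fin.castLE h i) = lab i (Nat.count (fun m => Fin.castLE h i ∈ M m) n)) :
    ∃ tE : Fin (k - l) → ℕ → S,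
      (∀ i : Fin (k - l), T.IsTrace (tE i) (σ 0 ⟨l + (i : ℕ), by have := i.isLt; omega⟩)) ∧
      ∀ n i, σ n i = finSplice h tA tE i (Nat.count (fun m => i ∈ M m) n) := by
  refine ⟨fun i => T.destutter (σ · _) (Nat.count fun m => _ ∈ M m),
    fun i => LTS.isTrace_destutter (hstay · _) fun n hn => ⟨_, hmove n _ hn⟩,
    fun n => forall_finSplice h
      (P := fun i (t : ℕ → S) => σ n i = t (Nat.count (fun m => i ∈ M m) n))
      (fun i => ?_) (fun i => ?_)⟩
  · exact LTS.eq_count_of_deterministic (x := (σ · _)) (b := fun m => _ ∈ M m) hdet (htA i)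
      (h0 i).symm (hstay · _) (fun n hn => hlab n i ▸ hmove n _ hn) n
  · exact Eq.symm <| LTS.destutter_count (fun m => hstay m _) n

section Schedules

variable {S : Type*} {k : ℕ} {ξ : Fin k → S → Prop} {M : Set (Fin k)} {sb : Fin k → S}

lemma ValidSched.eq_univ (hv : ValidSched ξ M sb) (hne : M.Nonempty)
    (hall : ∀ i, ξ i (sb i)) : M = Set.univ := by
  rcases hv with hv | hv
  · obtain ⟨i, hi⟩ := hne
    exact absurd (hall i) (hv i hi)
  · exact hv.1

lemma ValidSched.forall_of_mem (hv : ValidSched ξ M sb) {i : Fin k} (hi : i ∈ M)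
    (hξ : ξ i (sb i)) : ∀ i, ξ i (sb i) := by
  rcases hv with hv | hv
  · exact absurd hξ (hv i hi)
  · exact hv.2

lemma exists_infinite_setOf_mem {ι : Type*} [Finite ι] {M : ℕ → Set ι}
    (hne : ∀ n, (M n).Nonempty) : ∃ i, {n | i ∈ M n}.Infinite := by
  by_contra! hfin
  refine Set.infinite_univ (Set.Finite.subset (Set.finite_iUnion hfin) fun n _ => ?_)
  obtain ⟨i, hi⟩ := hne n
  exact Set.mem_iUnion.2 ⟨i, hi⟩

end Schedules

lemma HasObsUpTo.exists_lt_count {S : Type*} {ξ : S → Prop} [DecidablePred ξ] {t : ℕ → S}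
    {j : ℕ} (hobs : HasObsUpTo ξ t j) : ∃ p, j < Nat.count (fun n => ξ (t n)) p := by
  obtain ⟨f, hf, hξ⟩ := hobs
  refine ⟨f (Fin.last j) + 1, ?_⟩
  rw [Nat.count_eq_card_filter_range]
  calc j < #(univ.image f) := by simp [card_image_of_injective _ hf.injective]
    _ ≤ _ := card_le_card fun n hn => by
      obtain ⟨i, -, rfl⟩ := mem_image.1 hn
      simpa [hξ] using Nat.lt_succ_of_le (hf.monotone (Fin.le_last i))

section Observation

variable {S : Type*} {k : ℕ} {ξ : Fin k → S → Prop} {σ : ℕ → Fin k → S}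
  {M : ℕ → Set (Fin k)} [∀ i n, Decidable (i ∈ M n)] {t : Fin k → ℕ → S}

lemma count_trace_obs_eq_count_joint_obs [∀ i, DecidablePred (ξ i)] (hne : ∀ n, (M n).Nonempty)
    (hval : ∀ n, ValidSched ξ (M n) (σ n))
    (hsync : ∀ n i, σ n i = t i (Nat.count (fun m => i ∈ M m) n)) (n : ℕ) (i : Fin k) :
    Nat.count (fun p => ξ i (t i p)) (Nat.count (fun m => i ∈ M m) n) =
      Nat.count (fun m => ∀ i, ξ i (σ m i)) n := by
  induction n with
  | zero => simp
  | succ n ih =>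
    by_cases hi : i ∈ M n
    · have hobs : ξ i (σ n i) ↔ ∀ i, ξ i (σ n i) := ⟨(hval n).forall_of_mem hi, fun h => h i⟩
      rw [Nat.count_succ, if_pos hi, Nat.count_succ, Nat.count_succ, ih, ← hsync]
      exact congrArg _ (if_congr hobs rfl rfl)
    · have hnot_joint : ¬ ∀ i, ξ i (σ n i) := fun hall =>
        hi ((hval n).eq_univ (hne n) hall ▸ Set.mem_univ i)
      rw [Nat.count_succ, if_neg hi, add_zero, Nat.count_succ, ih, if_neg hnot_joint, add_zero]

lemma exists_round_eq_obsState (hne : ∀ n, (M n).Nonempty)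
    (hval : ∀ n, ValidSched ξ (M n) (σ n))
    (hsync : ∀ n i, σ n i = t i (Nat.count (fun m => i ∈ M m) n)) {j : ℕ}
    (hobs : ∀ i, HasObsUpTo (ξ i) (t i) j) :
    ∃ n, (∀ i, ξ i (σ n i)) ∧ (fun i => obsState (ξ i) (t i) j) = σ n := by
  classical
  set G : ℕ → Prop := fun m => ∀ i, ξ i (σ m i)
  have hcount := count_trace_obs_eq_count_joint_obs hne hval hsync
  -- A component scheduled infinitely often reaches all of its observation points, and it
  -- reaches each of them in a joint observation round.
  have hG : ∃ n, j < Nat.count G n := by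
    by_contra! hle
    obtain ⟨i, hi⟩ := exists_infinite_setOf_mem hne
    obtain ⟨p, hp⟩ := (hobs i).exists_lt_count
    obtain ⟨n, hn⟩ := Nat.surjective_count_of_infinite_setOfPred hi p
    have := hle n
    rw [← hcount n i, hn] at this
    omega
  obtain ⟨n, hn⟩ := hG
  have hlt : ∀ hf : (Set.ofPred G).Finite, j < #hf.toFinset :=
    fun hf => hn.trans_le (Nat.count_le_card hf n)
  have hGm : G (Nat.nth G j) := Nat.nth_mem j hlt
  refine ⟨Nat.nth G j, hGm, funext fun i => ?_⟩
  have hξ : ξ i (t i (Nat.count (fun m => i ∈ M m) (Nat.nth G j))) := hsync _ i ▸ hGm i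
  have hnth := Nat.nth_count (p := fun p => ξ i (t i p)) hξ
  rw [hcount, Nat.count_nth hlt] at hnth
  rw [obsState, hnth, hsync]

end Observation

section Replay

variable {S L : Type*} {k l : ℕ} (h : l ≤ k) (χ : (Fin k → S) × (Fin l → L) → (Fin k → S))
  (M : (Fin k → S) × (Fin l → L) → Set (Fin k)) (lab : Fin l → ℕ → L) (sb : Fin k → S)

open Classical in
/-- The run from `sb` in which the falsifier offers, for each universal component, the label
`lab` at the number of steps that component has taken so far (the second component), and the
verifier answers by `χ` with schedules `M`. -/
noncomputable def replayRun : ℕ → (Fin k → S) × (Fin k → ℕ)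
  | 0 => (sb, 0)
  | n + 1 =>
    let q := ((replayRun n).1, fun i => lab i ((replayRun n).2 (Fin.castLE h i)))
    (χ q, fun i => if i ∈ M q then (replayRun n).2 i + 1 else (replayRun n).2 i)

noncomputable def replayVer (n : ℕ) : (Fin k → S) × (Fin l → L) :=
  ((replayRun h χ M lab sb n).1, fun i => lab i ((replayRun h χ M lab sb n).2 (Fin.castLE h i)))

lemma replayVer_succ_fst (n : ℕ) :
    (replayVer h χ M lab sb (n + 1)).1 = χ (replayVer h χ M lab sb n) :=
  rfl

open Classical in
lemma replayRun_snd (n : ℕ) (i : Fin k) :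
    (replayRun h χ M lab sb n).2 i = Nat.count (fun m => i ∈ M (replayVer h χ M lab sb m)) n := by
  induction n with
  | zero => rfl
  | succ n ih =>
    rw [Nat.count_succ, ← ih]
    simp only [replayRun, replayVer]
    split_ifs with hi <;> simp [hi]

end Replay

section Game

variable {S L : Type*} {T : LTS S L} {k l : ℕ} {h : l ≤ k} {ψ : (Fin k → S) → Prop}
  {ξ : Fin k → S → Prop} {χ : (Fin k → S) × (Fin l → L) → (Fin k → S)}
  {Q : ℕ → (Fin k → S) × (Fin l → L)}

lemma verMove_inr_inl_iff {q : (Fin k → S) × (Fin l → L)} {sb' : Fin k → S} :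
    VerMove T h ξ (.inr q) (.inl sb') ↔ ∃ M : Set (Fin k), M.Nonempty ∧ ValidSched ξ M q.1 ∧
      ∃ le : Fin (k - l) → L, ComposedStep T M (finSplice h q.2 le) q.1 sb' := by
  constructor
  · rintro ⟨sb, lf, sb'', hq, hsb', hmove⟩
    cases hq
    cases hsb'
    exact hmove
  · exact fun hmove => ⟨q.1, q.2, sb', rfl, rfl, hmove⟩

def alternatingPlay (Q : ℕ → (Fin k → S) × (Fin l → L)) (n : ℕ) : GState k l S L :=
  if n % 2 = 0 then .inl (Q (n / 2)).1 else .inr (Q (n / 2))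

lemma alternatingPlay_two_mul (m : ℕ) : alternatingPlay Q (2 * m) = .inl (Q m).1 := by
  simp [alternatingPlay]

lemma alternatingPlay_two_mul_add_one (m : ℕ) :
    alternatingPlay Q (2 * m + 1) = .inr (Q m) := by
  simp [alternatingPlay, Nat.mul_add_div]

lemma isPlay_alternatingPlay (hχ : ∀ q, VerMove T h ξ (.inr q) (.inl (χ q)))
    (hinit : ∀ i, (Q 0).1 i ∈ T.Init) (hψ : ψ (Q 0).1) (hQ : ∀ n, (Q (n + 1)).1 = χ (Q n)) :
    IsPlay T h ψ ξ (alternatingPlay Q) := by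
  refine ⟨⟨(Q 0).1, alternatingPlay_two_mul 0, hinit, hψ⟩, fun n => ?_⟩
  obtain ⟨m, rfl | rfl⟩ := Nat.even_or_odd' n
  · exact .inl ⟨(Q m).1, (Q m).2, alternatingPlay_two_mul m, alternatingPlay_two_mul_add_one m⟩
  · right
    rw [alternatingPlay_two_mul_add_one, show 2 * m + 1 + 1 = 2 * (m + 1) by ring,
      alternatingPlay_two_mul, hQ]
    exact hχ (Q m)

lemma follows_alternatingPlay (hQ : ∀ n, (Q (n + 1)).1 = χ (Q n)) :
    Follows χ (alternatingPlay Q) := by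
  intro n q hq
  obtain ⟨m, rfl | rfl⟩ := Nat.even_or_odd' n
  · simp [alternatingPlay_two_mul] at hq
  · rw [alternatingPlay_two_mul_add_one, Sum.inr.injEq] at hq
    rw [show 2 * m + 1 + 1 = 2 * (m + 1) by ring, alternatingPlay_two_mul, hQ, hq]

end Game

theorem game_semantics_sound {S L : Type*} (T : LTS S L)
    (hdet : T.Deterministic) {k l : ℕ} (h : l ≤ k)
    (ψ : (Fin k → S) → Prop) (ξ : Fin k → S → Prop) (φ : (Fin k → S) → Prop) :
    ModelsGame T h ψ ξ φ → ModelsAE T h ψ ξ φ := by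
  classical
  rintro ⟨χ, hχ, hwin⟩ sb hinit hψ tA htA
  choose M hne hval le hstep using fun q => verMove_inr_inl_iff.1 (hχ q)
  choose lab hlab using fun i => (htA i).2
  set Q := replayVer h χ M lab sb
  have hsafe : ∀ n, ¬ BadState ξ φ (Q n).1 := fun n =>
    hwin _ (isPlay_alternatingPlay hχ hinit hψ (replayVer_succ_fst h χ M lab sb))
      (follows_alternatingPlay (replayVer_succ_fst h χ M lab sb)) (2 * n) _
      (alternatingPlay_two_mul n)
  obtain ⟨tE, htE, hsync⟩ := exists_traces_eq_run hdet h (M := fun n => M (Q n))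
    (fun n i hi => (hstep (Q n)).2 i hi) (fun n i hi => (hstep (Q n)).1 i hi) hlab
    (fun i => (htA i).1) (fun n i => by
      rw [finSplice_castLE]
      exact congrArg (lab i) (replayRun_snd h χ M lab sb n _))
  refine ⟨tE, htE, fun j hobs => ?_⟩
  obtain ⟨n, hall, heq⟩ := exists_round_eq_obsState (fun n => hne (Q n)) (fun n => hval (Q n))
    hsync hobs
  rw [heq]
  by_contra hφ
  exact hsafe n ⟨hall, hφ⟩
end

section
/- Let TS be a deterministic semantic labeled transition system with total transition relation, fix a ∀^l∃^(k−l) hyperproperty specification φ̂ given by ψ, (ξ i), φ, and let Λ♯ be a finite set of restrictions. If there exist Inv : (Fin k → S) → Prop and A : (Schedule × Λ♯) → (Fin k → S) → (Fin l → L) → Prop satisfying (R1) ∀ s̄, (∀ i, s̄ i ∈ Init) → ψ s̄ → Inv s̄; (R2) ∀ s̄, Inv s̄ → ¬ Bad s̄; (R3) ∀ M p s̄ ℓ∀, Inv s̄ → A (M,p) s̄ ℓ∀ → M is valid for s̄; (R4) ∀ M p s̄ ℓ∀ s̄', Inv s̄ → A (M,p) s̄ ℓ∀ → δ(M,p)(s̄,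 s̄', ℓ∀) → Inv s̄'; (R5) ∀ s̄ ℓ∀, Inv s̄ → ∃ M p, A (M,p) s̄ ℓ∀, then TS ⊨ φ̂ under the ∀∃ trace semantics. -/
/-- `allowed(M,p)(s̄,ℓ∀)`: the restriction of the composed transitions to `p` is nonempty. -/
def Allowed {S L : Type*} (T : LTS S L) {k l : ℕ} (h : l ≤ k) (M : Set (Fin k))
    (p : (Fin k → S) → Prop) (sb : Fin k → S) (lf : Fin l → L) : Prop :=
  ∃ (le : Fin (k - l) → L) (sb'' : Fin k → S),
    ComposedStep T M (finSplice h lf le) sb sb'' ∧ p sb''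

/-- `δ(M,p)(s̄, s̄', ℓ∀)`: the restricted transition relation for the abstract label `p`. -/
def DeltaR {S L : Type*} (T : LTS S L) {k l : ℕ} (h : l ≤ k) (M : Set (Fin k))
    (p : (Fin k → S) → Prop) (sb sb' : Fin k → S) (lf : Fin l → L) : Prop :=
  (∃ le : Fin (k - l) → L, ComposedStep T M (finSplice h lf le) sb sb') ∧
  (Allowed T h M p sb lf → p sb')

private lemma aux_count_key {τ : ℕ → ℕ} {O Sy : ℕ → Prop} [DecidablePred O] [DecidablePred Sy]
    (h0 : τ 0 = 0)
    (hs : ∀ n, Sy n → τ (n+1) = τ n + 1 ∧ O (τ n))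
    (hns : ∀ n, ¬ Sy n → τ (n+1) = τ n ∨ (τ (n+1) = τ n + 1 ∧ ¬ O (τ n))) :
    ∀ n, Nat.count O (τ n) = Nat.count Sy n := by
  intro n
  induction n with
  | zero => rw [h0]; simp [Nat.count_zero]
  | succ n ih =>
    by_cases hSy : Sy n
    · obtain ⟨ht, hO⟩ := hs n hSy
      rw [ht, Nat.count_succ, Nat.count_succ, if_pos hO, if_pos hSy, ih]
    · rcases hns n hSy with ht | ⟨ht, hO⟩
      · rw [ht, Nat.count_succ, if_neg hSy, ih]; omega
      · rw [ht, Nat.count_succ, Nat.count_succ, if_neg hO, if_neg hSy, ih]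

private lemma aux_hit (τ : ℕ → ℕ) (hstep : ∀ n, τ (n+1) = τ n ∨ τ (n+1) = τ n + 1)
    {N p : ℕ} (hN : τ N ≤ p) :
    ∀ m, N ≤ m → p ≤ τ m → ∃ n, N ≤ n ∧ τ n = p := by
  intro m
  induction m with
  | zero =>
    intro h1 h2
    have hN0 : N = 0 := by omega
    subst hN0
    exact ⟨0, le_rfl, le_antisymm hN h2⟩
  | succ m ih =>
    intro h1 h2
    by_cases hm : N ≤ m
    · by_cases hp : p ≤ τ m
      · exact ih hm hp
      · push_neg at hp
        rcases hstep m with ht | ht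
        · omega
        · exact ⟨m + 1, by omega, by omega⟩
    · have hN1 : N = m + 1 := by omega
      subst hN1
      exact ⟨m + 1, le_rfl, le_antisymm hN h2⟩

theorem restriction_encoding_sound_ae {S L : Type*} (T : LTS S L)
    (hdet : T.Deterministic) {k l : ℕ} (h : l ≤ k)
    (ψ : (Fin k → S) → Prop) (ξ : Fin k → S → Prop) (φ : (Fin k → S) → Prop)
    (Λ : Set ((Fin k → S) → Prop)) (hΛ : Λ.Finite)
    (Inv : (Fin k → S) → Prop)
    (A : Sched k × Λ → (Fin k → S) → (Fin l → L) → Prop)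
    (hR1 : ∀ sb, (∀ i, sb i ∈ T.Init) → ψ sb → Inv sb)
    (hR2 : ∀ sb, Inv sb → ¬ BadState ξ φ sb)
    (hR3 : ∀ (M : Sched k) (p : Λ) sb lf,
      Inv sb → A (M, p) sb lf → ValidSched ξ M.val sb)
    (hR4 : ∀ (M : Sched k) (p : Λ) sb lf sb',
      Inv sb → A (M, p) sb lf → DeltaR T h M.val p.val sb sb' lf → Inv sb')
    (hR5 : ∀ sb lf, Inv sb → ∃ M p, A (M, p) sb lf) :
    ModelsAE T h ψ ξ φ := by
    classical
  intro sb hinit hψ tA htA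
  -- arbitrary successors from totality
  choose ℓ0 s0 hs0 using T.total
  -- labels along the universal traces
  choose lab hlab using fun i => (htA i).2
  -- one-step existence lemma
  have EX : ∀ (cur : Fin k → S) (pos : Fin l → ℕ), Inv cur →
      (∀ i : Fin l, cur (Fin.castLE h i) = tA i (pos i)) →
      ∃ (M : Set (Fin k)) (nxt : Fin k → S),
        M.Nonempty ∧ ValidSched ξ M cur ∧ Inv nxt ∧
        (∀ i ∉ M, nxt i = cur i) ∧
        (∀ i ∈ M, ∃ ℓ, T.Tr (cur i) ℓ (nxt i)) ∧
        (∀ i : Fin l, Fin.castLE h i ∈ M → nxt (Fin.castLE h i) = tA i (pos i + 1)) := by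
    intro cur pos hInv hcur
    obtain ⟨M, p, hA⟩ := hR5 cur (fun i => lab i (pos i)) hInv
    have hvalid := hR3 M p cur _ hInv hA
    have hcurv : ∀ (i : Fin k) (hi : (i : ℕ) < l), cur i = tA ⟨i, hi⟩ (pos ⟨i, hi⟩) := by
      intro i hi
      have hc := hcur ⟨(i : ℕ), hi⟩
      rwa [show Fin.castLE h ⟨(i : ℕ), hi⟩ = i from Fin.ext rfl] at hc
    have hstep : ∃ nxt,
        (∃ le, ComposedStep T M.1 (finSplice h (fun i => lab i (pos i)) le) cur nxt) ∧
        (Allowed T h M.1 p.1 cur (fun i => lab i (pos i)) → p.1 nxt) := by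
      by_cases hall : Allowed T h M.1 p.1 cur (fun i => lab i (pos i))
      · obtain ⟨le, sb'', hcs, hp⟩ := hall
        exact ⟨sb'', ⟨le, hcs⟩, fun _ => hp⟩
      · refine ⟨fun i => if i ∈ M.1 then
            (if hi : (i : ℕ) < l then tA ⟨i, hi⟩ (pos ⟨i, hi⟩ + 1) else s0 (cur i)) else cur i,
          ⟨fun j => ℓ0 (cur ⟨l + (j : ℕ), by have := j.isLt; omega⟩), ?_, ?_⟩,
          fun hc => absurd hc hall⟩
        · intro i hi
          simp only [if_pos hi, finSplice]
          by_cases hil : (i : ℕ) < l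
          · rw [dif_pos hil, dif_pos hil, hcurv i hil]
            exact hlab _ _
          · rw [dif_neg hil, dif_neg hil]
            have hfin : (⟨l + ((i : ℕ) - l), by have := i.isLt; omega⟩ : Fin k) = i :=
              Fin.ext (by simp only []; omega)
            rw [hfin]
            exact hs0 _
        · intro i hi
          simp [if_neg hi]
    obtain ⟨nxt, ⟨le, hcs⟩, hres⟩ := hstep
    have hInv' := hR4 M p cur _ nxt hInv hA ⟨⟨le, hcs⟩, hres⟩
    refine ⟨M.1, nxt, M.2, hvalid, hInv', hcs.2, fun i hi => ⟨_, hcs.1 i hi⟩, ?_⟩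
    intro i hiM
    have h1 := hcs.1 _ hiM
    have h2 : finSplice h (fun i => lab i (pos i)) le (Fin.castLE h i) = lab i (pos i) := by
      simp [finSplice, Fin.castLE]
    rw [h2, hcur i] at h1
    exact (hdet _ _).unique h1 (hlab i (pos i))
  -- totalize the step function
  have EX' : ∀ d : (Fin k → S) × (Fin l → ℕ), ∃ (M : Set (Fin k)) (nxt : Fin k → S),
      Inv d.1 → (∀ i : Fin l, d.1 (Fin.castLE h i) = tA i (d.2 i)) →
      (M.Nonempty ∧ ValidSched ξ M d.1 ∧ Inv nxt ∧ (∀ i ∉ M, nxt i = d.1 i) ∧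
       (∀ i ∈ M, ∃ ℓ, T.Tr (d.1 i) ℓ (nxt i)) ∧
       (∀ i : Fin l, Fin.castLE h i ∈ M → nxt (Fin.castLE h i) = tA i (d.2 i + 1))) := by
    intro d
    by_cases hd : Inv d.1 ∧ ∀ i : Fin l, d.1 (Fin.castLE h i) = tA i (d.2 i)
    · obtain ⟨M, nxt, hp⟩ := EX d.1 d.2 hd.1 hd.2
      exact ⟨M, nxt, fun _ _ => hp⟩
    · exact ⟨Set.univ, d.1, fun h1 h2 => absurd ⟨h1, h2⟩ hd⟩
  choose Mf nf hMf using EX'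
  -- the composed run
  set stepf : (Fin k → S) × (Fin l → ℕ) → (Fin k → S) × (Fin l → ℕ) :=
    fun d => (nf d, fun i => if Fin.castLE h i ∈ Mf d then d.2 i + 1 else d.2 i) with hstepf
  set Rn : ℕ → (Fin k → S) × (Fin l → ℕ) := fun n => stepf^[n] (sb, fun _ => 0) with hRn
  have hR0 : Rn 0 = (sb, fun _ => 0) := rfl
  have hRsucc : ∀ n, Rn (n + 1) = stepf (Rn n) := fun n => Function.iterate_succ_apply' _ _ _
  have hGood : ∀ n, Inv (Rn n).1 ∧
      ∀ i : Fin l, (Rn n).1 (Fin.castLE h i) = tA i ((Rn n).2 i) := by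
    intro n
    induction n with
    | zero => exact ⟨hR1 sb hinit hψ, fun i => ((htA i).1).symm⟩
    | succ n ih =>
      have hp := hMf (Rn n) ih.1 ih.2
      rw [hRsucc]
      refine ⟨hp.2.2.1, fun i => ?_⟩
      by_cases hi : Fin.castLE h i ∈ Mf (Rn n)
      · show nf (Rn n) (Fin.castLE h i) = tA i (if Fin.castLE h i ∈ Mf (Rn n) then _ + 1 else _)
        rw [if_pos hi]
        exact hp.2.2.2.2.2 i hi
      · show nf (Rn n) (Fin.castLE h i) = tA i (if Fin.castLE h i ∈ Mf (Rn n) then _ + 1 else _)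
        rw [if_neg hi, hp.2.2.2.1 _ hi, ih.2 i]
  have hP := fun n => hMf (Rn n) (hGood n).1 (hGood n).2
  -- scheduling counts
  set Sch : Fin k → ℕ → Prop := fun i n => i ∈ Mf (Rn n) with hSchdef
  set τ : Fin k → ℕ → ℕ := fun i n => Nat.count (Sch i) n with hτdef
  have hτ0 : ∀ i, τ i 0 = 0 := fun i => Nat.count_zero _
  have hτsucc : ∀ i n, τ i (n + 1) = τ i n + if Sch i n then 1 else 0 :=
    fun i n => Nat.count_succ _ _
  have hτmono : ∀ i, Monotone (τ i) := fun i => Nat.count_monotone _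
  have hτstep : ∀ i n, τ i (n + 1) = τ i n ∨ τ i (n + 1) = τ i n + 1 := by
    intro i n; rw [hτsucc]; split <;> omega
  have hτs : ∀ i n, Sch i n → τ i (n + 1) = τ i n + 1 := by
    intro i n hi; rw [hτsucc, if_pos hi]
  have hτns : ∀ i n, ¬ Sch i n → τ i (n + 1) = τ i n := by
    intro i n hi; rw [hτsucc, if_neg hi]; omega
  have hconst : ∀ (i : Fin k) a b, a ≤ b → τ i a = τ i b → (Rn a).1 i = (Rn b).1 i := by
    intro i a b hab
    induction b, hab using Nat.le_induction with
    | base => intro _; rfl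
    | succ b hb ih =>
      intro hτab
      have h1 : τ i a ≤ τ i b := hτmono i hb
      have h2 : τ i b ≤ τ i (b + 1) := hτmono i (Nat.le_succ b)
      have hbb : τ i b = τ i (b + 1) := by omega
      have hnsch : ¬ Sch i b := by
        intro hsch
        have := hτs i b hsch
        omega
      have heq : (Rn (b + 1)).1 i = (Rn b).1 i := by
        rw [hRsucc]
        exact (hP b).2.2.2.1 i hnsch
      rw [heq]
      exact ih (by omega)
  have hposτ : ∀ n (i : Fin l), (Rn n).2 i = τ (Fin.castLE h i) n := by
    intro n i
    induction n with
    | zero => rw [hτ0]; rfl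
    | succ n ih =>
      rw [hRsucc, hτsucc]
      by_cases hi : Fin.castLE h i ∈ Mf (Rn n)
      · show (if Fin.castLE h i ∈ Mf (Rn n) then (Rn n).2 i + 1 else (Rn n).2 i) = _
        rw [if_pos hi, if_pos hi, ih]
      · show (if Fin.castLE h i ∈ Mf (Rn n) then (Rn n).2 i + 1 else (Rn n).2 i) = _
        rw [if_neg hi, if_neg hi, ih]
        omega
  -- the constructed (existential) traces
  set uE : Fin k → ℕ → S := fun I => Nat.rec (sb I) (fun p prev =>
      if hp : ∃ n, τ I n = p + 1 then (Rn (Nat.find hp)).1 I else s0 prev) with huEdef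
  have huE0 : ∀ I, uE I 0 = sb I := fun I => rfl
  have huEsucc : ∀ I p, uE I (p + 1) =
      if hp : ∃ n, τ I n = p + 1 then (Rn (Nat.find hp)).1 I else s0 (uE I p) :=
    fun I p => rfl
  have hE : ∀ (I : Fin k) n, (Rn n).1 I = uE I (τ I n) := by
    intro I n
    induction n with
    | zero => rw [hτ0]; exact huE0 I |>.symm ▸ rfl
    | succ n ih =>
      by_cases hsch : Sch I n
      · have ht := hτs I n hsch
        have hex : ∃ m, τ I m = τ I n + 1 := ⟨n + 1, ht⟩
        rw [ht, huEsucc, dif_pos hex]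
        have hle : Nat.find hex ≤ n + 1 := Nat.find_min' hex ht
        exact (hconst I (Nat.find hex) (n + 1) hle (by rw [Nat.find_spec hex, ht])).symm
      · rw [hτns I n hsch, ← ih, hRsucc]
        exact (hP n).2.2.2.1 I hsch
  have hEtrace : ∀ (I : Fin k) p, ∃ ℓ, T.Tr (uE I p) ℓ (uE I (p + 1)) := by
    intro I p
    rw [huEsucc]
    by_cases hp : ∃ n, τ I n = p + 1
    · rw [dif_pos hp]
      have hms : τ I (Nat.find hp) = p + 1 := Nat.find_spec hp
      have hm0 : Nat.find hp ≠ 0 := by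
        intro h0
        rw [h0, hτ0] at hms
        omega
      obtain ⟨t, hteq⟩ := Nat.exists_eq_succ_of_ne_zero hm0
      rw [Nat.succ_eq_add_one] at hteq
      have htmin : τ I t ≠ p + 1 := Nat.find_min hp (by omega)
      have hscht : Sch I t := by
        by_contra hc
        rw [hteq] at hms
        rw [hτns I t hc] at hms
        exact htmin hms
      have hτt : τ I t = p := by
        have := hτs I t hscht
        rw [hteq] at hms
        omega
      obtain ⟨ℓ, hℓ⟩ := (hP t).2.2.2.2.1 I hscht
      refine ⟨ℓ, ?_⟩
      have hup : uE I p = (Rn t).1 I := by rw [← hτt]; exact (hE I t).symm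
      rw [hup, hteq, hRsucc]
      exact hℓ
    · rw [dif_neg hp]
      exact ⟨ℓ0 _, hs0 _⟩
  set tE : Fin (k - l) → ℕ → S :=
    fun j => uE ⟨l + (j : ℕ), by have := j.isLt; omega⟩ with htEdef
  refine ⟨tE, fun j => ⟨rfl, fun p => hEtrace _ p⟩, ?_⟩
  set u : Fin k → ℕ → S := finSplice h tA tE with hudef
  -- relating the run to the traces
  have hP2 : ∀ (i : Fin k) n, (Rn n).1 i = u i (τ i n) := by
    intro i n
    by_cases hi : (i : ℕ) < l
    · have hui : u i = tA ⟨(i : ℕ), hi⟩ := by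
        rw [hudef]
        show finSplice h tA tE i = _
        unfold finSplice
        rw [dif_pos hi]
      rw [hui]
      have h1 := (hGood n).2 ⟨(i : ℕ), hi⟩
      have h2 := hposτ n ⟨(i : ℕ), hi⟩
      have hcast : Fin.castLE h ⟨(i : ℕ), hi⟩ = i := Fin.ext rfl
      rw [hcast] at h1 h2
      rw [h1, h2]
    · have hui : u i = uE i := by
        rw [hudef]
        show finSplice h tA tE i = _
        unfold finSplice
        rw [dif_neg hi]
        have hidx : (⟨l + ((i : ℕ) - l), by have := i.isLt; omega⟩ : Fin k) = i := by
          apply Fin.ext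
          show l + ((i : ℕ) - l) = (i : ℕ)
          omega
        show uE ⟨l + ((i : ℕ) - l), by have := i.isLt; omega⟩ = uE i
        exact congrArg uE hidx
      rw [hui]
      exact hE i n
  -- synchronisation points
  set Sy : ℕ → Prop := fun n => ∀ i, ξ i ((Rn n).1 i) with hSydef
  have hfreeze : ∀ (i : Fin k) n, ξ i ((Rn n).1 i) → ¬ Sy n → ¬ Sch i n := by
    intro i n hξ hSyn hsch
    rcases (hP n).2.1 with hc | ⟨_, hall⟩
    · exact hc i hsch hξ
    · exact hSyn hall
  have hsync : ∀ n, Sy n → ∀ i, Sch i n := by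
    intro n hSyn i
    rcases (hP n).2.1 with hc | ⟨huniv, _⟩
    · obtain ⟨i0, hi0⟩ := (hP n).1
      exact absurd (hSyn i0) (hc i0 hi0)
    · show i ∈ Mf (Rn n)
      rw [huniv]
      trivial
  have W : ∀ (i : Fin k) n, Nat.count (fun p => ξ i (u i p)) (τ i n) = Nat.count Sy n := by
    intro i
    refine aux_count_key (hτ0 i) ?_ ?_
    · intro n hSyn
      refine ⟨hτs i n (hsync n hSyn i), ?_⟩
      rw [← hP2 i n]
      exact hSyn i
    · intro n hSyn
      by_cases hsch : Sch i n
      · refine Or.inr ⟨hτs i n hsch, ?_⟩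
        rw [← hP2 i n]
        intro hξ
        exact hfreeze i n hξ hSyn hsch
      · exact Or.inl (hτns i n hsch)
  intro j hobs
  -- there are at least j+1 synchronisation points
  have insideSy : ∀ hf : (setOf Sy).Finite, j < hf.toFinset.card := by
    intro hf
    by_contra hle
    push_neg at hle
    obtain ⟨b, hb⟩ := hf.bddAbove
    set N0 := b + 1 with hN0
    have hnosync : ∀ n, N0 ≤ n → ¬ Sy n := by
      intro n hn hSyn
      have := hb (show n ∈ setOf Sy from hSyn)
      omega
    choose g hg using fun n => (hP n).1
    have histar : ∃ i : Fin k, {n | N0 ≤ n ∧ g n = i}.Infinite := by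
      by_contra hc
      push_neg at hc
      have hfin : (Set.Ici N0).Finite := by
        refine Set.Finite.subset (Set.finite_iUnion (f := fun i : Fin k => {n | N0 ≤ n ∧ g n = i}) hc) ?_
        intro n hn
        exact Set.mem_iUnion.2 ⟨g n, hn, rfl⟩
      exact Set.Ici_infinite N0 hfin
    obtain ⟨i, hi⟩ := histar
    have hgsch : ∀ n, g n = i → Sch i n := by
      intro n hgn
      have := hg n
      rwa [hgn] at this
    have hfr : ∀ n, N0 ≤ n → ¬ ξ i ((Rn n).1 i) := by
      intro n hn hξ
      have hstay : ∀ m, n ≤ m → ((Rn m).1 i = (Rn n).1 i ∧ ¬ Sch i m) := by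
        intro m hm
        induction m, hm using Nat.le_induction with
        | base => exact ⟨rfl, hfreeze i n hξ (hnosync n hn)⟩
        | succ m hm ih =>
          have heq : (Rn (m + 1)).1 i = (Rn m).1 i := by
            rw [hRsucc]
            exact (hP m).2.2.2.1 i ih.2
          have hξm : ξ i ((Rn (m + 1)).1 i) := by rw [heq, ih.1]; exact hξ
          exact ⟨heq.trans ih.1, hfreeze i (m + 1) hξm (hnosync (m + 1) (by omega))⟩
      obtain ⟨t, ht, hgt⟩ := hi.exists_gt n
      exact (hstay t (le_of_lt hgt)).2 (hgsch t ht.2)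
    have hub : ∀ c, ∃ n, N0 ≤ n ∧ c ≤ τ i n := by
      intro c
      induction c with
      | zero => exact ⟨N0, le_rfl, Nat.zero_le _⟩
      | succ c ih =>
        obtain ⟨n, hn, hc⟩ := ih
        obtain ⟨t, ht, hgt⟩ := hi.exists_gt n
        have hscht : Sch i t := hgsch t ht.2
        have h1 := hτs i t hscht
        have h2 := hτmono i (le_of_lt hgt)
        exact ⟨t + 1, by omega, by omega⟩
    have hOlt : ∀ p, ξ i (u i p) → p < τ i N0 := by
      intro p hO
      by_contra hge
      push_neg at hge
      obtain ⟨n, hn, hc⟩ := hub (p + 1)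
      obtain ⟨m, hm, hτm⟩ := aux_hit (τ i) (hτstep i) hge n hn (by omega)
      apply hfr m hm
      rw [hP2 i m, hτm]
      exact hO
    obtain ⟨f, hfm, hfo⟩ := hobs i
    have hinj : j + 1 ≤ Nat.count (fun p => ξ i (u i p)) (τ i N0) := by
      have hsub : ∀ t : Fin (j + 1),
          f t ∈ (Finset.range (τ i N0)).filter (fun p => ξ i (u i p)) :=
        fun t => Finset.mem_filter.2 ⟨Finset.mem_range.2 (hOlt _ (hfo t)), hfo t⟩
      have hcard := Finset.card_le_card_of_injOn
        (s := (Finset.univ : Finset (Fin (j + 1))))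
        (t := (Finset.range (τ i N0)).filter (fun p => ξ i (u i p)))
        f (fun t _ => hsub t) (hfm.injective.injOn)
      rw [Nat.count_eq_card_filter_range]
      simpa using hcard
    rw [W i N0] at hinj
    have hcle : Nat.count Sy N0 ≤ hf.toFinset.card := by
      rw [Nat.count_eq_card_filter_range]
      refine Finset.card_le_card ?_
      intro x hx
      simp only [Finset.mem_filter] at hx
      exact hf.mem_toFinset.2 hx.2
    omega
  -- conclude
  have hSym : Sy (Nat.nth Sy j) := Nat.nth_mem j insideSy
  have hcountm : Nat.count Sy (Nat.nth Sy j) = j := Nat.count_nth insideSy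
  have hobseq : ∀ i, obsState (ξ i) (u i) j = (Rn (Nat.nth Sy j)).1 i := by
    intro i
    have hOm : ξ i (u i (τ i (Nat.nth Sy j))) := by
      rw [← hP2 i (Nat.nth Sy j)]
      exact hSym i
    have hc : Nat.count (fun p => ξ i (u i p)) (τ i (Nat.nth Sy j)) = j := by
      rw [W i (Nat.nth Sy j), hcountm]
    have hnth : Nat.nth (fun p => ξ i (u i p)) j = τ i (Nat.nth Sy j) := by
      conv_lhs => rw [← hc]
      exact Nat.nth_count hOm
    show u i (Nat.nth (fun n => ξ i (u i n)) j) = _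
    rw [hnth]
    exact (hP2 i (Nat.nth Sy j)).symm
  have hφ : φ ((Rn (Nat.nth Sy j)).1) := by
    by_contra hφ
    exact hR2 _ (hGood (Nat.nth Sy j)).1 ⟨hSym, hφ⟩
  have hfun : (fun i => obsState (ξ i) (u i) j) = (Rn (Nat.nth Sy j)).1 := funext hobseq
  show φ (fun i => obsState (ξ i) (u i) j)
  rw [hfun]
  exact hφ
end
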